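/- arXiv:1304.7378 — 3 statements merged into one kernel-verified Lean document; each statement's English description precedes it below -/
import Mathlib

section
/- For every n ≥ 3, the sphere braid group Brₙ(S²) is isomorphic to the group defined by the presentation with two generators δ₁, δ and relations: δ₁δⁱδ₁δ⁻ⁱ = δⁱδ₁δ⁻ⁱδ₁ for 2 ≤ i ≤ n/2; δⁿ = (δδ₁)ⁿ⁻¹; and δⁿ(δ₁δ⁻¹)ⁿ⁻¹ = 1; an isomorphism is given by δ₁ ↦ δ₁ and δ ↦ δ₁δ₂⋯δₙ₋₁. -/
/-!
STATEMENT 6: For every n ≥ 3, the sphere braid group Brₙ(S²) is isomorphic to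
the group presented by two generators δ₁, δ with relations
δ₁δⁱδ₁δ⁻ⁱ = δⁱδ₁δ⁻ⁱδ₁ (2 ≤ i ≤ n/2), δⁿ = (δδ₁)ⁿ⁻¹ and δⁿ(δ₁δ⁻¹)ⁿ⁻¹ = 1,
via δ₁ ↦ δ₁, δ ↦ δ₁δ₂⋯δₙ₋₁.
-/

open FreeGroup

/-- The relations of the Zariski presentation of the sphere braid group
`Brₙ(S²)`, on generators `δ₁, …, δ_{n-1}` (encoded as `Fin (n-1)`, `i`
standing for `δ_{i+1}`): the braid relations together with the sphere
relation `δ₁δ₂⋯δₙ₋₂δₙ₋₁²δₙ₋₂⋯δ₂δ₁ = 1`. -/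
def sphereBraidRels (n : ℕ) : Set (FreeGroup (Fin (n - 1))) :=
  {r | (∃ i j : Fin (n - 1), (i.val + 1 < j.val ∨ j.val + 1 < i.val) ∧
          r = of i * of j * (of j * of i)⁻¹) ∨
       (∃ i j : Fin (n - 1), j.val = i.val + 1 ∧
          r = of i * of j * of i * (of j * of i * of j)⁻¹) ∨
       r = (List.ofFn (fun i : Fin (n - 1) => of i)).prod *
           (List.ofFn (fun i : Fin (n - 1) => of i)).reverse.prod}

/-- The sphere braid group `Brₙ(S²)`. -/
def SphereBraidGroup (n : ℕ) : Type := PresentedGroup (sphereBraidRels n)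

noncomputable instance (n : ℕ) : Group (SphereBraidGroup n) :=
  inferInstanceAs (Group (PresentedGroup (sphereBraidRels n)))

/-- The two generators δ₁ and δ. -/
inductive SphereTwoGen : Type
  | d1 : SphereTwoGen
  | d : SphereTwoGen

open SphereTwoGen in
/-- The relations of the two-generator presentation of the sphere braid
group. -/
def sphereTwoGenRels (n : ℕ) : Set (FreeGroup SphereTwoGen) :=
  {r | (∃ i : ℕ, 2 ≤ i ∧ 2 * i ≤ n ∧
          r = (of d1 * (of d) ^ i * of d1 * ((of d) ^ i)⁻¹) *
              ((of d) ^ i * of d1 * ((of d) ^ i)⁻¹ * of d1)⁻¹) ∨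
       r = (of d) ^ n * (((of d) * of d1) ^ (n - 1))⁻¹ ∨
       r = (of d) ^ n * (of d1 * (of d)⁻¹) ^ (n - 1)}

/-!
The element `δ = δ₁⋯δₙ₋₁` conjugates `δᵢ` to `δᵢ₊₁` (a consequence of the braid relations), so
`δᵢ₊₁ = δⁱδ₁δ⁻ⁱ` and `Brₙ(S²)` is generated by `δ₁` and `δ`. Conversely, in the two-generator
group put `σᵢ = δⁱδ₁δ⁻ⁱ`. Since `(δδ₁)ⁿ⁻¹ = δ (σ₀⋯σₙ₋₂) δⁿ⁻¹ δ⁻¹`, the relation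
`δⁿ = (δδ₁)ⁿ⁻¹` says exactly that `σ₀⋯σₙ₋₂ = δ`, and likewise `δⁿ(δ₁δ⁻¹)ⁿ⁻¹ = 1` says
`σ₀⁻¹⋯σₙ₋₂⁻¹ = δ`; together they give the sphere relation. The first relation also makes `δⁿ`
commute with `δ₁`, so conjugating by `δⁱ` turns the commutation relations for `i ≤ n/2` into those
for `n/2 < i ≤ n - 2`; finally `δσᵢδ⁻¹ = σᵢ₊₁` with `δ = σ₀⋯σₙ₋₂` is equivalent to the braid
relation between `σᵢ` and `σᵢ₊₁`.
-/

theorem List.ofFn_comp_val_eq_map_range {α : Type*} (f : ℕ → α) (m : ℕ) :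
    List.ofFn (fun i : Fin m => f i) = (List.range m).map f := by
  rw [List.ofFn_eq_map, ← List.map_coe_finRange_eq_range, List.map_map]
  rfl

theorem PresentedGroup.lift_of_eq_one_of_mem {α : Type*} {rels : Set (FreeGroup α)}
    {r : FreeGroup α} (hr : r ∈ rels) :
    FreeGroup.lift (PresentedGroup.of (rels := rels)) r = 1 := by
  rw [FreeGroup.ext_hom (FreeGroup.lift PresentedGroup.of) (PresentedGroup.mk rels) fun _ => rfl]
  exact PresentedGroup.one_of_mem hr

section Conjugation

variable {G : Type*} [Group G]

theorem mul_pow_eq_prod_conj_mul_pow (a t : G) (k : ℕ) :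
    (a * t) ^ k = ((List.range k).map fun i => t ^ i * a * (t ^ i)⁻¹).prod * t ^ k := by
  induction k with
  | zero => simp
  | succ k ih =>
    rw [pow_succ, ih, List.prod_range_succ, pow_succ]
    group

theorem prod_range_conj_pow_eq_iff (a t : G) (m : ℕ) :
    ((List.range m).map fun i => t ^ i * a * (t ^ i)⁻¹).prod = t ↔ (t * a) ^ m = t ^ (m + 1) := by
  have hconj : (t * a) ^ m = t * (a * t) ^ m * t⁻¹ := by
    rw [← conj_pow]
    group
  rw [hconj, mul_pow_eq_prod_conj_mul_pow, show t ^ (m + 1) = t * (t * t ^ m) * t⁻¹ by group,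
    mul_left_inj, mul_right_inj, mul_left_inj]

theorem conj_pow_eq_of_conj_eq_succ {s : ℕ → G} {t : G} {m : ℕ}
    (h : ∀ j, j + 1 < m → t * s j * t⁻¹ = s (j + 1)) {i : ℕ} (hi : i < m) :
    t ^ i * s 0 * (t ^ i)⁻¹ = s i := by
  induction i with
  | zero => simp
  | succ i ih =>
    rw [← h i hi, ← ih (by omega)]
    group

/-- Write `s 0 ⋯ s (m - 1) = A * (s j * s (j + 1)) * B`, where `A` commutes with `s (j + 1)` and
`B` with `s j`. -/
theorem conj_prod_range_eq_iff_braid (s : ℕ → G) {m j : ℕ}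
    (hcomm : ∀ p q, p + 2 ≤ q → q < m → Commute (s p) (s q)) (hj : j + 2 ≤ m) :
    ((List.range m).map s).prod * s j * ((List.range m).map s).prod⁻¹ = s (j + 1) ↔
      s j * s (j + 1) * s j = s (j + 1) * s j * s (j + 1) := by
  obtain ⟨k, rfl⟩ : ∃ k, m = j + 2 + k := ⟨m - (j + 2), by omega⟩
  set A := ((List.range j).map s).prod
  set B := ((List.range k).map fun i => s (j + 2 + i)).prod
  have hsplit : ((List.range (j + 2 + k)).map s).prod = A * (s j * s (j + 1)) * B := by
    rw [List.range_add, List.map_append, List.prod_append, List.prod_range_succ,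
      List.prod_range_succ, List.map_map]
    simp only [A, B, Function.comp_def, mul_assoc]
  have hA : Commute A (s (j + 1)) := Commute.list_prod_left _ _ fun x hx => by
    obtain ⟨i, hi, rfl⟩ := List.mem_map.mp hx
    rw [List.mem_range] at hi
    exact hcomm i (j + 1) (by omega) (by omega)
  have hB : Commute B (s j) := Commute.list_prod_left _ _ fun x hx => by
    obtain ⟨i, hi, rfl⟩ := List.mem_map.mp hx
    rw [List.mem_range] at hi
    exact (hcomm j (j + 2 + i) (by omega) (by omega)).symm
  have hleft : A * (s j * s (j + 1)) * B * s j = A * (s j * s (j + 1) * s j) * B := by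
    rw [mul_assoc _ B, hB.eq]
    group
  have hright :
      s (j + 1) * (A * (s j * s (j + 1)) * B) = A * (s (j + 1) * s j * s (j + 1)) * B := by
    rw [← mul_assoc, ← mul_assoc, hA.symm.eq]
    group
  rw [hsplit, mul_inv_eq_iff_eq_mul, hleft, hright, mul_left_inj, mul_right_inj]

theorem conj_pow_conj_pow (a t : G) (i j : ℕ) :
    t ^ i * (t ^ j * a * (t ^ j)⁻¹) * (t ^ i)⁻¹ = t ^ (i + j) * a * (t ^ (i + j))⁻¹ := by
  rw [pow_add]
  group

theorem mul_mul_mul_inv_eq_iff_commute (a c : G) :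
    a * c * a * c⁻¹ = c * a * c⁻¹ * a ↔ Commute a (c * a * c⁻¹) := by
  rw [Commute, SemiconjBy]
  group

theorem pow_mul_mul_inv_pow_eq_one_iff (a t : G) (k n : ℕ) :
    t ^ n * (a * t⁻¹) ^ k = 1 ↔ (t * a⁻¹) ^ k = t ^ n := by
  rw [show a * t⁻¹ = (t * a⁻¹)⁻¹ by group, inv_pow, mul_inv_eq_one, eq_comm]

end Conjugation

section TwoGenerator

variable {G : Type*} [Group G]

/-- The relations of `sphereTwoGenRels n`, with `a` for `δ₁` and `t` for `δ`. -/
def SphereTwoGenRelations (n : ℕ) (a t : G) : Prop :=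
  (∀ i, 2 ≤ i → 2 * i ≤ n → Commute a (t ^ i * a * (t ^ i)⁻¹)) ∧
    (t * a) ^ (n - 1) = t ^ n ∧ (t * a⁻¹) ^ (n - 1) = t ^ n

theorem lift_eq_one_of_mem_sphereTwoGenRels_iff {n : ℕ} (f : SphereTwoGen → G) :
    (∀ r ∈ sphereTwoGenRels n, FreeGroup.lift f r = 1) ↔
      SphereTwoGenRelations n (f .d1) (f .d) := by
  constructor
  · intro h
    refine ⟨fun i hi hin => ?_, ?_, ?_⟩
    · have hr := h _ (Or.inl ⟨i, hi, hin, rfl⟩)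
      simp only [_root_.map_mul, _root_.map_inv, _root_.map_pow, lift_apply_of,
        mul_inv_eq_one] at hr
      exact (mul_mul_mul_inv_eq_iff_commute _ _).mp hr
    · have hr := h _ (Or.inr (Or.inl rfl))
      simp only [_root_.map_mul, _root_.map_inv, _root_.map_pow, lift_apply_of,
        mul_inv_eq_one] at hr
      exact hr.symm
    · have hr := h _ (Or.inr (Or.inr rfl))
      simp only [_root_.map_mul, _root_.map_inv, _root_.map_pow, lift_apply_of] at hr
      exact (pow_mul_mul_inv_pow_eq_one_iff _ _ _ _).mp hr
  · rintro ⟨hcomm, hpow, hpow_inv⟩ r (⟨i, hi, hin, rfl⟩ | rfl | rfl) <;>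
      simp only [_root_.map_mul, _root_.map_inv, _root_.map_pow, lift_apply_of, mul_inv_eq_one]
    · exact (mul_mul_mul_inv_eq_iff_commute _ _).mpr (hcomm i hi hin)
    · exact hpow.symm
    · exact (pow_mul_mul_inv_pow_eq_one_iff _ _ _ _).mpr hpow_inv

end TwoGenerator

namespace SphereBraidGroup

/-- The generator `δ_{i+1}` for `i < n - 1`, and junk `1` otherwise, so that indices live in `ℕ`. -/
noncomputable def gen (n i : ℕ) : PresentedGroup (sphereBraidRels n) :=
  if h : i < n - 1 then PresentedGroup.of (rels := sphereBraidRels n) ⟨i, h⟩ else 1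

noncomputable def delta (n : ℕ) : PresentedGroup (sphereBraidRels n) :=
  ((List.range (n - 1)).map (gen n)).prod

variable {n : ℕ}

theorem gen_of_lt {i : ℕ} (h : i < n - 1) :
    gen n i = PresentedGroup.of (rels := sphereBraidRels n) ⟨i, h⟩ :=
  dif_pos h

theorem ofFn_of_eq_map_gen :
    List.ofFn (fun i : Fin (n - 1) => PresentedGroup.of (rels := sphereBraidRels n) i) =
      (List.range (n - 1)).map (gen n) := by
  rw [← List.ofFn_comp_val_eq_map_range]
  congr 1
  funext i
  rw [gen_of_lt i.isLt]

theorem gen_commute {i j : ℕ} (hij : i + 2 ≤ j) (hj : j < n - 1) : Commute (gen n i) (gen n j) := by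
  rw [gen_of_lt (by omega), gen_of_lt hj]
  exact PresentedGroup.mk_eq_mk_of_mul_inv_mem (rels := sphereBraidRels n)
    (x := of ⟨i, _⟩ * of ⟨j, hj⟩) (y := of ⟨j, hj⟩ * of ⟨i, _⟩)
    (Or.inl ⟨_, _, Or.inl (by simp only; omega), rfl⟩)

theorem gen_braid {j : ℕ} (hj : j + 1 < n - 1) :
    gen n j * gen n (j + 1) * gen n j = gen n (j + 1) * gen n j * gen n (j + 1) := by
  rw [gen_of_lt (by omega), gen_of_lt hj]
  exact PresentedGroup.mk_eq_mk_of_mul_inv_mem (rels := sphereBraidRels n)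
    (x := of ⟨j, _⟩ * of ⟨j + 1, hj⟩ * of ⟨j, _⟩)
    (y := of ⟨j + 1, hj⟩ * of ⟨j, _⟩ * of ⟨j + 1, hj⟩)
    (Or.inr (Or.inl ⟨_, _, rfl, rfl⟩))

theorem delta_mul_reverse_prod_gen :
    delta n * ((List.range (n - 1)).map (gen n)).reverse.prod = 1 := by
  have h := PresentedGroup.one_of_mem (rels := sphereBraidRels n)
    (x := (List.ofFn fun i => of i).prod * (List.ofFn fun i => of i).reverse.prod)
    (Or.inr (Or.inr rfl))
  simp only [_root_.map_mul, map_list_prod, List.map_reverse, List.map_ofFn] at h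
  rwa [delta, ← ofFn_of_eq_map_gen]

theorem conj_delta_gen {j : ℕ} (hj : j + 1 < n - 1) :
    delta n * gen n j * (delta n)⁻¹ = gen n (j + 1) :=
  (conj_prod_range_eq_iff_braid (gen n) (fun _ _ hpq hq => gen_commute hpq hq) (by omega)).mpr
    (gen_braid hj)

theorem conj_delta_pow_gen_zero {i : ℕ} (hi : i < n - 1) :
    delta n ^ i * gen n 0 * (delta n ^ i)⁻¹ = gen n i :=
  conj_pow_eq_of_conj_eq_succ (fun _ => conj_delta_gen) hi

theorem prod_range_conj_delta_pow_gen_zero :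
    ((List.range (n - 1)).map fun i => delta n ^ i * gen n 0 * (delta n ^ i)⁻¹).prod = delta n := by
  rw [List.map_congr_left fun i hi => conj_delta_pow_gen_zero (List.mem_range.mp hi)]
  rfl

theorem prod_range_conj_delta_pow_inv_gen_zero :
    ((List.range (n - 1)).map fun i => delta n ^ i * (gen n 0)⁻¹ * (delta n ^ i)⁻¹).prod =
      delta n := by
  have hrev := delta_mul_reverse_prod_gen (n := n)
  rw [List.prod_reverse_noncomm, mul_inv_eq_one, List.map_map] at hrev
  refine Eq.trans (congrArg List.prod (List.map_congr_left fun i hi => ?_)) hrev.symm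
  rw [Function.comp_apply, ← conj_delta_pow_gen_zero (List.mem_range.mp hi)]
  group

theorem sphereTwoGenRelations_gen_zero_delta (hn : n ≠ 0) :
    SphereTwoGenRelations n (gen n 0) (delta n) := by
  obtain ⟨m, rfl⟩ := Nat.exists_eq_succ_of_ne_zero hn
  refine ⟨fun i hi hin => ?_, ?_, ?_⟩
  · rw [conj_delta_pow_gen_zero (by omega)]
    exact gen_commute hi (by omega)
  · exact (prod_range_conj_pow_eq_iff _ _ m).mp prod_range_conj_delta_pow_gen_zero
  · exact (prod_range_conj_pow_eq_iff _ _ m).mp prod_range_conj_delta_pow_inv_gen_zero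

end SphereBraidGroup

namespace SphereTwoGenRelations

variable {G : Type*} [Group G] {n : ℕ} {a t : G}

theorem commute_pow (h : SphereTwoGenRelations n a t) : Commute a (t ^ n) := by
  have hta : Commute (t * a) (t ^ n) := h.2.1 ▸ (Commute.refl _).pow_right _
  simpa using ((Commute.refl t).pow_right n).inv_left.mul_left hta

theorem commute_conj_pow (h : SphereTwoGenRelations n a t) {d : ℕ} (hd : 2 ≤ d)
    (hdn : d + 2 ≤ n) : Commute a (t ^ d * a * (t ^ d)⁻¹) := by
  by_cases hd' : 2 * d ≤ n
  · exact h.1 d hd hd'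
  -- otherwise conjugate the relation for `n - d` by `t ^ d`, using that `t ^ n` centralises `a`
  have hconj := (h.1 (n - d) (by omega) (by omega)).conj (t ^ d)
  rwa [conj_pow_conj_pow, Nat.add_sub_cancel' (by omega), ← h.commute_pow.eq,
    mul_inv_cancel_right, Commute.symm_iff] at hconj

theorem commute_conj_pow_conj_pow (h : SphereTwoGenRelations n a t) {i j : ℕ} (hij : i + 2 ≤ j)
    (hjn : j + 2 ≤ n + i) :
    Commute (t ^ i * a * (t ^ i)⁻¹) (t ^ j * a * (t ^ j)⁻¹) := by
  have hconj := (h.commute_conj_pow (d := j - i) (by omega) (by omega)).conj (t ^ i)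
  rwa [conj_pow_conj_pow, Nat.add_sub_cancel' (by omega)] at hconj

theorem prod_range_conj_pow (h : SphereTwoGenRelations n a t) (hn : n ≠ 0) :
    ((List.range (n - 1)).map fun i => t ^ i * a * (t ^ i)⁻¹).prod = t := by
  rw [prod_range_conj_pow_eq_iff, Nat.sub_add_cancel (Nat.one_le_iff_ne_zero.mpr hn)]
  exact h.2.1

theorem prod_range_inv_conj_pow (h : SphereTwoGenRelations n a t) (hn : n ≠ 0) :
    ((List.range (n - 1)).map fun i => (t ^ i * a * (t ^ i)⁻¹)⁻¹).prod = t := by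
  have hinv : ((List.range (n - 1)).map fun i => t ^ i * a⁻¹ * (t ^ i)⁻¹).prod = t := by
    rw [prod_range_conj_pow_eq_iff, Nat.sub_add_cancel (Nat.one_le_iff_ne_zero.mpr hn)]
    exact h.2.2
  refine (congrArg List.prod (List.map_congr_left fun i _ => ?_)).trans hinv
  group

theorem conj_pow_braid (h : SphereTwoGenRelations n a t) (hn : n ≠ 0) {j : ℕ}
    (hj : j + 2 ≤ n - 1) :
    let s := fun i : ℕ => t ^ i * a * (t ^ i)⁻¹
    s j * s (j + 1) * s j = s (j + 1) * s j * s (j + 1) := by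
  intro s
  refine (conj_prod_range_eq_iff_braid s
    (fun p q hpq hq => h.commute_conj_pow_conj_pow hpq (by omega)) hj).mp ?_
  rw [h.prod_range_conj_pow hn, ← pow_one t, conj_pow_conj_pow, add_comm]

theorem lift_eq_one_of_mem_sphereBraidRels (h : SphereTwoGenRelations n a t) (hn : n ≠ 0) :
    ∀ r ∈ sphereBraidRels n,
      FreeGroup.lift (fun i : Fin (n - 1) => t ^ (i : ℕ) * a * (t ^ (i : ℕ))⁻¹) r = 1 := by
  rintro r (⟨i, j, hij, rfl⟩ | ⟨i, j, hij, rfl⟩ | rfl) <;>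
    simp only [_root_.map_mul, _root_.map_inv, lift_apply_of, mul_inv_eq_one]
  · rcases hij with hij | hij
    · exact h.commute_conj_pow_conj_pow hij (by omega)
    · exact (h.commute_conj_pow_conj_pow hij (by omega)).symm
  · rw [hij]
    exact h.conj_pow_braid hn (by omega)
  · rw [map_list_prod, map_list_prod, List.map_reverse, List.map_ofFn, Function.comp_def]
    simp only [lift_apply_of]
    rw [List.ofFn_comp_val_eq_map_range (fun i => t ^ i * a * (t ^ i)⁻¹),
      List.prod_reverse_noncomm, List.map_map]
    simp only [Function.comp_def]
    rw [h.prod_range_conj_pow hn, h.prod_range_inv_conj_pow hn, mul_inv_cancel]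

end SphereTwoGenRelations

theorem sphereTwoGenRelations_of (n : ℕ) :
    SphereTwoGenRelations n (PresentedGroup.of (rels := sphereTwoGenRels n) .d1)
      (PresentedGroup.of .d) :=
  (lift_eq_one_of_mem_sphereTwoGenRels_iff _).mp fun _ => PresentedGroup.lift_of_eq_one_of_mem

namespace SphereBraidGroup

variable {n : ℕ}

noncomputable def ofTwoGen (hn : n ≠ 0) :
    PresentedGroup (sphereTwoGenRels n) →* PresentedGroup (sphereBraidRels n) :=
  PresentedGroup.toGroup (f := fun | .d1 => gen n 0 | .d => delta n)
    ((lift_eq_one_of_mem_sphereTwoGenRels_iff _).mpr (sphereTwoGenRelations_gen_zero_delta hn))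

noncomputable def toTwoGen (hn : n ≠ 0) :
    PresentedGroup (sphereBraidRels n) →* PresentedGroup (sphereTwoGenRels n) :=
  PresentedGroup.toGroup ((sphereTwoGenRelations_of n).lift_eq_one_of_mem_sphereBraidRels hn)

theorem ofTwoGen_of_d1 (hn : n ≠ 0) : ofTwoGen hn (PresentedGroup.of .d1) = gen n 0 :=
  PresentedGroup.toGroup.of _

theorem ofTwoGen_of_d (hn : n ≠ 0) : ofTwoGen hn (PresentedGroup.of .d) = delta n :=
  PresentedGroup.toGroup.of _

theorem toTwoGen_gen (hn : n ≠ 0) {i : ℕ} (hi : i < n - 1) :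
    toTwoGen hn (gen n i) =
      PresentedGroup.of .d ^ i * PresentedGroup.of .d1 * (PresentedGroup.of .d ^ i)⁻¹ := by
  rw [gen_of_lt hi]
  exact PresentedGroup.toGroup.of _

theorem toTwoGen_comp_ofTwoGen (hn : 2 ≤ n) :
    (toTwoGen (by omega)).comp (ofTwoGen (n := n) (by omega)) = MonoidHom.id _ := by
  refine PresentedGroup.ext fun x => ?_
  rw [MonoidHom.comp_apply, MonoidHom.id_apply]
  cases x with
  | d1 =>
    rw [ofTwoGen_of_d1, toTwoGen_gen _ (by omega)]
    group
  | d =>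
    rw [ofTwoGen_of_d, delta, map_list_prod, List.map_map]
    simp only [Function.comp_def]
    rw [List.map_congr_left fun i hi => toTwoGen_gen _ (List.mem_range.mp hi)]
    exact (sphereTwoGenRelations_of n).prod_range_conj_pow (by omega)

theorem ofTwoGen_comp_toTwoGen (hn : n ≠ 0) :
    (ofTwoGen hn).comp (toTwoGen hn) = MonoidHom.id _ := by
  refine PresentedGroup.ext fun i => ?_
  rw [MonoidHom.comp_apply, ← gen_of_lt i.isLt, toTwoGen_gen _ i.isLt, _root_.map_mul,
    _root_.map_mul, _root_.map_inv, _root_.map_pow, ofTwoGen_of_d, ofTwoGen_of_d1]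
  exact conj_delta_pow_gen_zero i.isLt

end SphereBraidGroup

theorem sphere_braid_group_two_generator_presentation (n : ℕ) (hn : 3 ≤ n) :
    ∃ e : PresentedGroup (sphereTwoGenRels n) ≃* SphereBraidGroup n,
      e (PresentedGroup.of SphereTwoGen.d1) =
        PresentedGroup.of (rels := sphereBraidRels n) ⟨0, by omega⟩ ∧
      e (PresentedGroup.of SphereTwoGen.d) =
        (List.ofFn (fun i : Fin (n - 1) =>
          PresentedGroup.of (rels := sphereBraidRels n) i)).prod := by
  refine ⟨MonoidHom.toMulEquiv (SphereBraidGroup.ofTwoGen (by omega))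
    (SphereBraidGroup.toTwoGen (by omega)) (SphereBraidGroup.toTwoGen_comp_ofTwoGen (by omega))
    (SphereBraidGroup.ofTwoGen_comp_toTwoGen _), ?_, ?_⟩
  · exact (SphereBraidGroup.ofTwoGen_of_d1 (by omega)).trans (SphereBraidGroup.gen_of_lt _)
  · exact (SphereBraidGroup.ofTwoGen_of_d (by omega)).trans
      (congrArg List.prod SphereBraidGroup.ofFn_of_eq_map_gen.symm)
end

section
/- For every n ≥ 2, the singular braid monoid SBₙ is isomorphic to the monoid defined by the presentation with generators a_{ts}, a_{ts}⁻¹ for 1 ≤ s < t ≤ n and b_{qp} for 1 ≤ p < q ≤ n and relations: a_{ts}a_{rq} = a_{rq}a_{ts} for (t−r)(t−q)(s−r)(s−q) > 0; a_{ts}a_{sr} = a_{tr}a_{ts} = a_{sr}a_{tr} for 1 ≤ r < s < t ≤ n; a_{ts}a_{ts}⁻¹ = a_{ts}⁻¹a_{ts} = 1; a_{ts}b_{rq} = b_{rq}a_{ts} for (t−r)(t−q)(s−r)(s−q) > 0; a_{ts}b_{ts} = b_{ts}a_{ts}; a_{ts}b_{sr} = b_{tr}a_{ts} for r < s < t; a_{sr}b_{tr}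 = b_{ts}a_{sr} for r < s < t; a_{tr}b_{ts} = b_{sr}a_{tr} for r < s < t; and b_{ts}b_{rq} = b_{rq}b_{ts} for (t−r)(t−q)(s−r)(s−q) > 0; an isomorphism is given by sending a_{(i+1)i} ↦ σᵢ, a_{(i+1)i}⁻¹ ↦ σᵢ⁻¹, b_{(i+1)i} ↦ xᵢ, and in general a_{ts} ↦ (σ_{t−1}⋯σ_{s+1})σ_s(σ_{s+1}⁻¹⋯σ_{t−1}⁻¹) and b_{ts} ↦ (σ_{t−1}⋯σ_{s+1})x_s(σ_{s+1}⁻¹⋯σ_{t−1}⁻¹). -/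
/-!
STATEMENT 9: For every n ≥ 2, the singular braid monoid SBₙ is isomorphic to
the monoid presented by the Birman–Ko–Lee generators a_{ts}, a_{ts}⁻¹
(1 ≤ s < t ≤ n) and b_{qp} (1 ≤ p < q ≤ n) with the relations listed below,
via a_{ts} ↦ (σ_{t−1}⋯σ_{s+1})σ_s(σ_{s+1}⁻¹⋯σ_{t−1}⁻¹),
a_{ts}⁻¹ ↦ (σ_{t−1}⋯σ_{s+1})σ_s⁻¹(σ_{s+1}⁻¹⋯σ_{t−1}⁻¹) and
b_{ts} ↦ (σ_{t−1}⋯σ_{s+1})x_s(σ_{s+1}⁻¹⋯σ_{t−1}⁻¹).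
-/

open FreeMonoid

/-- Generators of the singular braid monoid `SBₙ`: `σᵢ`, `σᵢ⁻¹`, `xᵢ` for
`i = 1, …, n-1` (index `i : Fin (n-1)` stands for subscript `i+1`). -/
inductive SBGen (n : ℕ) : Type
  | sig (i : Fin (n - 1)) : SBGen n
  | sinv (i : Fin (n - 1)) : SBGen n
  | x (i : Fin (n - 1)) : SBGen n

open SBGen in
/-- The defining relations of the singular braid monoid `SBₙ`. -/
inductive sbRel (n : ℕ) : FreeMonoid (SBGen n) → FreeMonoid (SBGen n) → Prop
  | comm_ss (i j : Fin (n - 1)) (h : i.val + 1 < j.val ∨ j.val + 1 < i.val) :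
      sbRel n (of (sig i) * of (sig j)) (of (sig j) * of (sig i))
  | comm_xx (i j : Fin (n - 1)) (h : i.val + 1 < j.val ∨ j.val + 1 < i.val) :
      sbRel n (of (x i) * of (x j)) (of (x j) * of (x i))
  | comm_xs (i j : Fin (n - 1)) (h : i.val + 1 ≠ j.val ∧ j.val + 1 ≠ i.val) :
      sbRel n (of (x i) * of (sig j)) (of (sig j) * of (x i))
  | braid (i j : Fin (n - 1)) (h : j.val = i.val + 1) :
      sbRel n (of (sig i) * of (sig j) * of (sig i))
              (of (sig j) * of (sig i) * of (sig j))
  | braid_x₁ (i j : Fin (n - 1)) (h : j.val = i.val + 1) :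
      sbRel n (of (sig i) * of (sig j) * of (x i))
              (of (x j) * of (sig i) * of (sig j))
  | braid_x₂ (i j : Fin (n - 1)) (h : j.val = i.val + 1) :
      sbRel n (of (sig j) * of (sig i) * of (x j))
              (of (x i) * of (sig j) * of (sig i))
  | inv_right (i : Fin (n - 1)) : sbRel n (of (sig i) * of (sinv i)) 1
  | inv_left (i : Fin (n - 1)) : sbRel n (of (sinv i) * of (sig i)) 1

/-- The singular braid monoid `SBₙ`. -/
def SingBraidMonoid (n : ℕ) : Type := PresentedMonoid (sbRel n)

instance (n : ℕ) : Monoid (SingBraidMonoid n) :=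
  inferInstanceAs (Monoid (PresentedMonoid (sbRel n)))

/-- `σ_k` (1-based index) as a word in the free monoid on the generators of
`SBₙ`. -/
def sg (n k : ℕ) : FreeMonoid (SBGen n) :=
  if h : 1 ≤ k ∧ k ≤ n - 1 then of (SBGen.sig ⟨k - 1, by omega⟩) else 1

/-- `σ_k⁻¹` (1-based index) as a word in the free monoid on the generators of
`SBₙ`. -/
def sgi (n k : ℕ) : FreeMonoid (SBGen n) :=
  if h : 1 ≤ k ∧ k ≤ n - 1 then of (SBGen.sinv ⟨k - 1, by omega⟩) else 1

/-- `x_k` (1-based index) as a word in the free monoid on the generators of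
`SBₙ`. -/
def xg (n k : ℕ) : FreeMonoid (SBGen n) :=
  if h : 1 ≤ k ∧ k ≤ n - 1 then of (SBGen.x ⟨k - 1, by omega⟩) else 1

/-- The word `(σ_{t−1}⋯σ_{s+1}) g (σ_{s+1}⁻¹⋯σ_{t−1}⁻¹)` used to express the
Birman–Ko–Lee generators through the classical ones. -/
def bklWord (n t s : ℕ) (g : FreeMonoid (SBGen n)) : FreeMonoid (SBGen n) :=
  ((List.range (t - 1 - s)).map (fun j => sg n (t - 1 - j))).prod * g *
  ((List.range (t - 1 - s)).map (fun j => sgi n (s + 1 + j))).prod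

/-- Index pairs `(t, s)` with `1 ≤ s < t ≤ n`. -/
def SPair (n : ℕ) : Type := {p : ℕ × ℕ // 1 ≤ p.2 ∧ p.2 < p.1 ∧ p.1 ≤ n}

/-- The Birman–Ko–Lee generators of `SBₙ`: `a_{ts}`, `a_{ts}⁻¹` and `b_{ts}`
for `1 ≤ s < t ≤ n`. -/
inductive BKLGen (n : ℕ) : Type
  | a (p : SPair n) : BKLGen n
  | ainv (p : SPair n) : BKLGen n
  | b (p : SPair n) : BKLGen n

/-- `a_{ts}` as an element of the free monoid on the Birman–Ko–Lee
generators (the unit if the indices are invalid). -/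
def ag (n t s : ℕ) : FreeMonoid (BKLGen n) :=
  if h : 1 ≤ s ∧ s < t ∧ t ≤ n then of (BKLGen.a ⟨(t, s), h⟩) else 1

/-- `a_{ts}⁻¹` as an element of the free monoid on the Birman–Ko–Lee
generators. -/
def agi (n t s : ℕ) : FreeMonoid (BKLGen n) :=
  if h : 1 ≤ s ∧ s < t ∧ t ≤ n then of (BKLGen.ainv ⟨(t, s), h⟩) else 1

/-- `b_{ts}` as an element of the free monoid on the Birman–Ko–Lee
generators. -/
def bg (n t s : ℕ) : FreeMonoid (BKLGen n) :=
  if h : 1 ≤ s ∧ s < t ∧ t ≤ n then of (BKLGen.b ⟨(t, s), h⟩) else 1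

/-- The Birman–Ko–Lee relations for the singular braid monoid. -/
inductive bklRel (n : ℕ) : FreeMonoid (BKLGen n) → FreeMonoid (BKLGen n) → Prop
  | comm_aa (t s r q : ℕ) (h₁ : 1 ≤ s ∧ s < t ∧ t ≤ n) (h₂ : 1 ≤ q ∧ q < r ∧ r ≤ n)
      (h : 0 < ((t : ℤ) - r) * ((t : ℤ) - q) * ((s : ℤ) - r) * ((s : ℤ) - q)) :
      bklRel n (ag n t s * ag n r q) (ag n r q * ag n t s)
  | band₁ (t s r : ℕ) (h₁ : 1 ≤ r) (h₂ : r < s) (h₃ : s < t) (h₄ : t ≤ n) :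
      bklRel n (ag n t s * ag n s r) (ag n t r * ag n t s)
  | band₂ (t s r : ℕ) (h₁ : 1 ≤ r) (h₂ : r < s) (h₃ : s < t) (h₄ : t ≤ n) :
      bklRel n (ag n t r * ag n t s) (ag n s r * ag n t r)
  | inv_right (t s : ℕ) (h : 1 ≤ s ∧ s < t ∧ t ≤ n) :
      bklRel n (ag n t s * agi n t s) 1
  | inv_left (t s : ℕ) (h : 1 ≤ s ∧ s < t ∧ t ≤ n) :
      bklRel n (agi n t s * ag n t s) 1
  | comm_ab (t s r q : ℕ) (h₁ : 1 ≤ s ∧ s < t ∧ t ≤ n) (h₂ : 1 ≤ q ∧ q < r ∧ r ≤ n)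
      (h : 0 < ((t : ℤ) - r) * ((t : ℤ) - q) * ((s : ℤ) - r) * ((s : ℤ) - q)) :
      bklRel n (ag n t s * bg n r q) (bg n r q * ag n t s)
  | comm_ab' (t s : ℕ) (h : 1 ≤ s ∧ s < t ∧ t ≤ n) :
      bklRel n (ag n t s * bg n t s) (bg n t s * ag n t s)
  | mixed₁ (t s r : ℕ) (h₁ : 1 ≤ r) (h₂ : r < s) (h₃ : s < t) (h₄ : t ≤ n) :
      bklRel n (ag n t s * bg n s r) (bg n t r * ag n t s)
  | mixed₂ (t s r : ℕ) (h₁ : 1 ≤ r) (h₂ : r < s) (h₃ : s < t) (h₄ : t ≤ n) :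
      bklRel n (ag n s r * bg n t r) (bg n t s * ag n s r)
  | mixed₃ (t s r : ℕ) (h₁ : 1 ≤ r) (h₂ : r < s) (h₃ : s < t) (h₄ : t ≤ n) :
      bklRel n (ag n t r * bg n t s) (bg n s r * ag n t r)
  | comm_bb (t s r q : ℕ) (h₁ : 1 ≤ s ∧ s < t ∧ t ≤ n) (h₂ : 1 ≤ q ∧ q < r ∧ r ≤ n)
      (h : 0 < ((t : ℤ) - r) * ((t : ℤ) - q) * ((s : ℤ) - r) * ((s : ℤ) - q)) :
      bklRel n (bg n t s * bg n r q) (bg n r q * bg n t s)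

/-- The singular braid monoid in the Birman–Ko–Lee presentation. -/
def SingBKLMonoid (n : ℕ) : Type := PresentedMonoid (bklRel n)

instance (n : ℕ) : Monoid (SingBKLMonoid n) :=
  inferInstanceAs (Monoid (PresentedMonoid (bklRel n)))

/-!
Send `a_{ts}` and `b_{ts}` to the conjugates of `σ_s` and `x_s` by `σ_{t-1} ⋯ σ_{s+1}`, and
`σ_i`, `x_i` back to `a_{i+1,i}`, `b_{i+1,i}`. The substance is that the first assignment respects
the Birman–Ko–Lee relations. In any monoid, all of them hold for such conjugates ("bands") of a
family `y` that stands to the `σ_j` in the relation `σ_j` or `x_j` does in `SBₙ`; they follow by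
induction on the length of the conjugator from one commutation fact: `y_i` commutes with the band
`(t, s)` whenever `i < s - 1`, `s < i < t - 1` or `t < i`. Conversely the
singular braid relations among adjacent generators are instances of the Birman–Ko–Lee relations,
and `a_{t+1,s} = a_{t+1,t} a_{ts} a_{t+1,t}⁻¹`, `b_{t+1,s} = a_{t+1,t} b_{ts} a_{t+1,t}⁻¹` show
that the two maps are inverse to each other.
-/

theorem Commute.units_conj {M : Type*} [Monoid M] {a b : M} (h : Commute a b) (u : Mˣ) :
    Commute (u * a * ↑u⁻¹ : M) (u * b * ↑u⁻¹) := by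
  simp only [Commute, SemiconjBy, mul_assoc, Units.inv_mul_cancel_left]
  rw [← mul_assoc a, h.eq, mul_assoc]

namespace BKL

-- The sign condition of the commutation relations: the pairs `{s, t}` and `{q, r}` neither
-- interleave nor share an endpoint.
theorem separated_of_mul_pos {t s r q : ℕ} (hst : s < t)
    (h : 0 < ((t : ℤ) - r) * ((t : ℤ) - q) * ((s : ℤ) - r) * ((s : ℤ) - q)) :
    (r < s ∨ (s < q ∧ r < t)) ∨ (t < q ∨ (q < s ∧ t < r)) := by
  simp only [mul_pos_iff, mul_neg_iff, sub_pos, sub_neg] at h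
  omega

theorem mul_pos_of_lt_or_lt {t s r q : ℕ} (hst : s < t) (hqr : q < r) (h : r < s ∨ t < q) :
    0 < ((t : ℤ) - r) * ((t : ℤ) - q) * ((s : ℤ) - r) * ((s : ℤ) - q) := by
  simp only [mul_pos_iff, mul_neg_iff, sub_pos, sub_neg]
  omega

variable {M N : Type*} [Monoid M] [Monoid N]

/-- `σ (t - 1) * ⋯ * σ (s + 1)`, the left factor of `bklWord`. -/
def conjugator (σ : ℕ → Mˣ) (t s : ℕ) : Mˣ :=
  ((List.range (t - 1 - s)).map fun j => σ (t - 1 - j)).prod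

def band (σ : ℕ → Mˣ) (y : ℕ → M) (t s : ℕ) : M :=
  conjugator σ t s * y s * ↑(conjugator σ t s)⁻¹

def bandUnit (σ : ℕ → Mˣ) (t s : ℕ) : Mˣ :=
  conjugator σ t s * σ s * (conjugator σ t s)⁻¹

section Conjugator

variable (σ : ℕ → Mˣ) (y : ℕ → M)

@[simp]
theorem conjugator_self_succ (s : ℕ) : conjugator σ (s + 1) s = 1 := by
  simp [conjugator]

theorem conjugator_succ {t s : ℕ} (h : s < t) :
    conjugator σ (t + 1) s = σ t * conjugator σ t s := by
  rw [conjugator, show t + 1 - 1 - s = t - 1 - s + 1 by omega, List.range_succ_eq_map,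
    List.map_cons, List.prod_cons, List.map_map, conjugator]
  congr 2
  refine List.map_congr_left fun j _ => ?_
  simp only [Function.comp_apply]
  congr 1
  omega

@[simp]
theorem band_self_succ (s : ℕ) : band σ y (s + 1) s = y s := by
  simp [band]

theorem band_succ {t s : ℕ} (h : s < t) :
    band σ y (t + 1) s = σ t * band σ y t s * ↑(σ t)⁻¹ := by
  simp only [band, conjugator_succ σ h, mul_inv_rev, Units.val_mul, mul_assoc]

theorem semiconjBy_band_succ {t s : ℕ} (h : s < t) :
    SemiconjBy (σ t : M) (band σ y t s) (band σ y (t + 1) s) :=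
  band_succ σ y h ▸ Units.mk_semiconjBy _ _

theorem val_bandUnit (t s : ℕ) : (bandUnit σ t s : M) = band σ (fun i => σ i) t s := by
  simp [bandUnit, band]

@[simp]
theorem bandUnit_self_succ (s : ℕ) : bandUnit σ (s + 1) s = σ s := by
  simp [bandUnit]

theorem bandUnit_succ {t s : ℕ} (h : s < t) :
    bandUnit σ (t + 1) s = σ t * bandUnit σ t s * (σ t)⁻¹ := by
  simp only [bandUnit, conjugator_succ σ h, mul_inv_rev, mul_assoc]

theorem commute_conjugator {m : M} {t s : ℕ} (h : ∀ i, s < i → i < t → Commute m (σ i)) :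
    Commute m (conjugator σ t s) := by
  rcases Nat.lt_or_ge s t with hst | hts
  · induction t, hst using Nat.le_induction with
    | base => simp
    | succ t hst ih =>
      rw [conjugator_succ σ hst, Units.val_mul]
      exact (h t hst t.lt_succ_self).mul_right (ih fun i h₁ h₂ => h i h₁ (by omega))
  · simp [conjugator, show t - 1 - s = 0 by omega]

theorem map_conjugator (f : M →* N) (t s : ℕ) :
    Units.map f (conjugator σ t s) = conjugator (fun i => Units.map f (σ i)) t s := by
  simp [conjugator, map_list_prod, List.map_map, Function.comp_def]

theorem map_band (f : M →* N) (t s : ℕ) :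
    f (band σ y t s) = band (fun i => Units.map f (σ i)) (fun i => f (y i)) t s := by
  simp only [band, map_mul, ← map_conjugator, Units.coe_map, Units.coe_map_inv]

theorem map_bandUnit (f : M →* N) (t s : ℕ) :
    Units.map f (bandUnit σ t s) = bandUnit (fun i => Units.map f (σ i)) t s := by
  simp only [bandUnit, map_mul, map_inv, map_conjugator]

theorem band_eq_of_semiconjBy {z : ℕ → M} {n s : ℕ} (h₀ : y s = z (s + 1))
    (h : ∀ t, s < t → t < n → SemiconjBy (σ t : M) (z t) (z (t + 1))) {t : ℕ} (hst : s < t)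
    (htn : t ≤ n) : band σ y t s = z t := by
  induction t, hst using Nat.le_induction with
  | base => simp [h₀]
  | succ t hst ih =>
    rw [band_succ σ y hst, ih (by omega), Units.mul_inv_eq_iff_eq_mul]
    exact h t hst htn

end Conjugator

/-- The relations of `SBₙ` between a family `y` and the `σ j`: for `y = σ` they are the braid
relations, for `y = x` the relations involving one singular generator. -/
structure IsCompatible (n : ℕ) (σ : ℕ → Mˣ) (y : ℕ → M) : Prop where
  commute : ∀ i j, i + 1 ≠ j → j + 1 ≠ i → Commute (y i) (σ j)
  semiconjBy_succ : ∀ i, 1 ≤ i → i + 1 < n → SemiconjBy (σ i * σ (i + 1) : M) (y i) (y (i + 1))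
  semiconjBy_pred : ∀ i, 1 ≤ i → i + 1 < n → SemiconjBy (σ (i + 1) * σ i : M) (y (i + 1)) (y i)

def FarCommute (y z : ℕ → M) : Prop :=
  ∀ i j, i + 1 < j ∨ j + 1 < i → Commute (y i) (z j)

section Compatible

variable {n : ℕ} {σ : ℕ → Mˣ} {y z : ℕ → M}

theorem IsCompatible.farCommute_sigma_left (hy : IsCompatible n σ y) :
    FarCommute (fun i => (σ i : M)) y :=
  fun i j h => (hy.commute j i (by omega) (by omega)).symm

theorem IsCompatible.farCommute_sigma_right (hy : IsCompatible n σ y) :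
    FarCommute y (fun i => (σ i : M)) :=
  fun i j h => hy.commute i j (by omega) (by omega)

theorem commute_band (hy : IsCompatible n σ y) (hyz : FarCommute y z) {t s i : ℕ}
    (hst : s < t) (htn : t ≤ n) (hi : i + 1 < s ∨ (s < i ∧ i + 1 < t) ∨ t < i) :
    Commute (y i) (band σ z t s) := by
  induction t using Nat.strong_induction_on generalizing i with
  | _ t ih =>
  rcases (Nat.succ_le_of_lt hst).eq_or_lt with rfl | hlt
  · rw [band_self_succ]
    exact hyz i s (by omega)
  obtain ⟨t, rfl⟩ : ∃ t', t = t' + 1 := ⟨t - 1, by omega⟩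
  replace hst : s < t := by omega
  rw [band_succ σ z hst]
  by_cases hcorner : s < i ∧ t = i + 1
  · -- `y i` is the conjugate of `y (i + 1)` by `σ (i + 1) σ i`, which commutes with `band σ z i s`
    obtain ⟨hsi, rfl⟩ := hcorner
    set u := σ (i + 1) * σ i
    have hyi : y i = u * y (i + 1) * ↑u⁻¹ := by
      rw [Units.eq_mul_inv_iff_mul_eq, Units.val_mul]
      exact (hy.semiconjBy_pred i (by omega) (by omega)).eq.symm
    have hband : (σ (i + 1) * band σ z (i + 1) s * ↑(σ (i + 1))⁻¹ : M) =
        u * band σ z i s * ↑u⁻¹ := by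
      simp [u, band_succ σ z hsi, mul_assoc]
    rw [hband, hyi]
    exact (ih i (by omega) hsi (by omega) (Or.inr (Or.inr (by omega)))).units_conj u
  · exact ((hy.commute i t (by omega) (by omega)).mul_right
      (ih t (by omega) hst (by omega) (by omega))).mul_right
      (hy.commute i t (by omega) (by omega)).units_inv_right

theorem semiconjBy_band_succ_right (hσ : IsCompatible n σ (fun i => (σ i : M)))
    (hy : IsCompatible n σ y) {t s : ℕ} (hs : 1 ≤ s) (hst : s + 1 < t) (htn : t ≤ n) :
    SemiconjBy (σ s : M) (band σ y t s) (band σ y t (s + 1)) := by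
  induction t, hst using Nat.le_induction with
  | base =>
    rw [band_succ σ y s.lt_succ_self, band_self_succ, band_self_succ]
    have h := (hy.semiconjBy_succ s hs (by omega)).mul_left
      (Units.mk_semiconjBy (σ (s + 1)) (y s)).units_inv_symm_left
    simpa [mul_assoc] using h
  | succ t hst ih =>
    have hc : Commute (σ s : M) (σ t) := hσ.commute s t (by omega) (by omega)
    rw [band_succ σ y (by omega), band_succ σ y hst]
    exact (SemiconjBy.mul_right hc (ih (by omega))).mul_right hc.units_inv_right

theorem semiconjBy_conjugator_mul_band (hσ : IsCompatible n σ (fun i => (σ i : M)))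
    (hy : IsCompatible n σ y) {t s r : ℕ} (hr : 1 ≤ r) (hrs : r < s) (hst : s < t)
    (htn : t ≤ n) : SemiconjBy (conjugator σ s r * σ r : M) (band σ y t r) (band σ y t s) := by
  induction s, hrs using Nat.le_induction with
  | base => simpa using semiconjBy_band_succ_right hσ hy hr hst htn
  | succ s hrs ih =>
    rw [conjugator_succ σ hrs, Units.val_mul, mul_assoc]
    exact (semiconjBy_band_succ_right hσ hy (by omega) hst htn).mul_left (ih (by omega))

theorem commute_bandUnit_band (hy : IsCompatible n σ y) (t s : ℕ) :
    Commute (bandUnit σ t s : M) (band σ y t s) := by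
  simpa [bandUnit, band] using (hy.commute s s (by omega) (by omega)).symm.units_conj _

theorem semiconjBy_bandUnit_band₁ (hσ : IsCompatible n σ (fun i => (σ i : M)))
    (hy : IsCompatible n σ y) {t s r : ℕ} (hrs : r < s) (hst : s < t) (htn : t ≤ n) :
    SemiconjBy (bandUnit σ t s : M) (band σ y s r) (band σ y t r) := by
  induction t, hst using Nat.le_induction with
  | base => simpa using semiconjBy_band_succ σ y hrs
  | succ t hst ih =>
    have hc : Commute (σ t : M) (band σ y s r) :=
      commute_band hσ hy.farCommute_sigma_left hrs (by omega) (by omega)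
    rw [bandUnit_succ σ hst, Units.val_mul, Units.val_mul]
    exact ((semiconjBy_band_succ σ y (by omega)).mul_left (ih (by omega))).mul_left
      hc.units_inv_left

theorem semiconjBy_bandUnit_band₂ (hσ : IsCompatible n σ (fun i => (σ i : M)))
    (hy : IsCompatible n σ y) {t s r : ℕ} (hr : 1 ≤ r) (hrs : r < s) (hst : s < t)
    (htn : t ≤ n) : SemiconjBy (bandUnit σ s r : M) (band σ y t r) (band σ y t s) := by
  -- the `σ i` with `r < i < s` lie strictly inside the band `(t, r)`
  have hc : Commute (band σ y t r) (conjugator σ s r) := commute_conjugator σ fun i hri his =>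
    (commute_band hσ hy.farCommute_sigma_left (by omega) htn (by omega)).symm
  rw [bandUnit, Units.val_mul, Units.val_mul]
  exact (semiconjBy_conjugator_mul_band hσ hy hr hrs hst htn).mul_left hc.symm.units_inv_left

theorem semiconjBy_bandUnit_succ_band (hσ : IsCompatible n σ (fun i => (σ i : M)))
    (hy : IsCompatible n σ y) {s r : ℕ} (hr : 1 ≤ r) (hrs : r < s) (hsn : s < n) :
    SemiconjBy (bandUnit σ (s + 1) r : M) (y s) (band σ y s r) := by
  obtain ⟨d, rfl⟩ := Nat.exists_eq_add_of_lt hrs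
  induction d generalizing r with
  | zero =>
    rw [bandUnit_succ σ (by omega), bandUnit_self_succ, band_self_succ, Units.val_mul,
      Units.val_mul]
    exact (hy.semiconjBy_pred r hr (by omega)).mul_left
      (hy.commute (r + 1) (r + 1) (by omega) (by omega)).symm.units_inv_left
  | succ d ih =>
    -- move the lower end of both bands up by one, conjugating by `σ r`
    have hA := (semiconjBy_band_succ_right hσ hσ hr (t := r + (d + 1) + 1 + 1) (by omega)
      (by omega)).eq
    rw [← val_bandUnit, ← val_bandUnit, ← Units.eq_inv_mul_iff_mul_eq, ← mul_assoc] at hA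
    have ih' := ih (r := r + 1) (by omega) (by omega) (by omega)
    rw [show r + 1 + d + 1 = r + (d + 1) + 1 by omega] at ih'
    rw [hA]
    exact ((semiconjBy_band_succ_right hσ hy hr (by omega) (by omega)).units_inv_symm_left.mul_left
      ih').mul_left (hy.commute _ r (by omega) (by omega)).symm

theorem semiconjBy_bandUnit_band₃ (hσ : IsCompatible n σ (fun i => (σ i : M)))
    (hy : IsCompatible n σ y) {t s r : ℕ} (hr : 1 ≤ r) (hrs : r < s) (hst : s < t)
    (htn : t ≤ n) : SemiconjBy (bandUnit σ t r : M) (band σ y t s) (band σ y s r) := by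
  induction t, hst using Nat.le_induction with
  | base => simpa using semiconjBy_bandUnit_succ_band hσ hy hr hrs htn
  | succ t hst ih =>
    have hc : Commute (σ t : M) (band σ y s r) :=
      commute_band hσ hy.farCommute_sigma_left hrs (by omega) (by omega)
    rw [bandUnit_succ σ (by omega), Units.val_mul, Units.val_mul]
    exact (SemiconjBy.mul_left hc (ih (by omega))).mul_left
      (semiconjBy_band_succ σ y hst).units_inv_symm_left

theorem commute_band_band_of_lt_or_nested (hσ : IsCompatible n σ (fun i => (σ i : M)))
    (hy : IsCompatible n σ y) (hz : IsCompatible n σ z) (hzy : FarCommute z y)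
    {t s r q : ℕ} (hst : s < t) (hqr : q < r) (htn : t ≤ n) (h : r < s ∨ (s < q ∧ r < t)) :
    Commute (band σ y t s) (band σ z r q) := by
  have hc : Commute (band σ y t s) (conjugator σ r q) := commute_conjugator σ fun i hqi hir =>
    (commute_band hσ hy.farCommute_sigma_left hst htn (by omega)).symm
  exact (SemiconjBy.mul_right hc (commute_band hz hzy hst htn (by omega)).symm).mul_right
    hc.units_inv_right

theorem commute_band_band (hσ : IsCompatible n σ (fun i => (σ i : M)))
    (hy : IsCompatible n σ y) (hz : IsCompatible n σ z) (hyz : FarCommute y z)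
    (hzy : FarCommute z y) {t s r q : ℕ} (hst : s < t) (hqr : q < r) (htn : t ≤ n) (hrn : r ≤ n)
    (h : 0 < ((t : ℤ) - r) * ((t : ℤ) - q) * ((s : ℤ) - r) * ((s : ℤ) - q)) :
    Commute (band σ y t s) (band σ z r q) := by
  rcases separated_of_mul_pos hst h with h' | h'
  · exact commute_band_band_of_lt_or_nested hσ hy hz hzy hst hqr htn h'
  · exact (commute_band_band_of_lt_or_nested hσ hz hy hyz hqr hst hrn h').symm

end Compatible

end BKL

namespace SingBraidMonoid

variable {n : ℕ}

def mk (n : ℕ) : FreeMonoid (SBGen n) →* SingBraidMonoid n := PresentedMonoid.mk (sbRel n)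

theorem mk_eq_mk_of_rel {u v : FreeMonoid (SBGen n)} (h : sbRel n u v) : mk n u = mk n v :=
  PresentedMonoid.mk_eq_mk_of_rel h

def sigma (n k : ℕ) : (SingBraidMonoid n)ˣ where
  val := mk n (sg n k)
  inv := mk n (sgi n k)
  val_inv := by
    rw [← map_mul, ← map_one (mk n), sg, sgi]
    split_ifs
    · exact mk_eq_mk_of_rel (.inv_right _)
    · rw [one_mul]
  inv_val := by
    rw [← map_mul, ← map_one (mk n), sg, sgi]
    split_ifs
    · exact mk_eq_mk_of_rel (.inv_left _)
    · rw [one_mul]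

def x (n k : ℕ) : SingBraidMonoid n := mk n (xg n k)

theorem val_sigma (k : ℕ) : (sigma n k : SingBraidMonoid n) = mk n (sg n k) := rfl

theorem val_inv_sigma (k : ℕ) : (↑(sigma n k)⁻¹ : SingBraidMonoid n) = mk n (sgi n k) := rfl

theorem sg_of_valid {k : ℕ} (h₁ : 1 ≤ k) (h₂ : k < n) :
    sg n k = FreeMonoid.of (SBGen.sig ⟨k - 1, by omega⟩) := dif_pos ⟨h₁, by omega⟩

theorem xg_of_valid {k : ℕ} (h₁ : 1 ≤ k) (h₂ : k < n) :
    xg n k = FreeMonoid.of (SBGen.x ⟨k - 1, by omega⟩) := dif_pos ⟨h₁, by omega⟩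

theorem val_sigma_succ (i : Fin (n - 1)) :
    (sigma n (i + 1) : SingBraidMonoid n) = PresentedMonoid.of (sbRel n) (.sig i) := by
  rw [val_sigma, sg_of_valid (by omega) (by omega)]
  rfl

theorem val_inv_sigma_succ (i : Fin (n - 1)) :
    (↑(sigma n (i + 1))⁻¹ : SingBraidMonoid n) = PresentedMonoid.of (sbRel n) (.sinv i) := by
  rw [val_inv_sigma, sgi, dif_pos (by omega)]
  rfl

theorem x_succ (i : Fin (n - 1)) : x n (i + 1) = PresentedMonoid.of (sbRel n) (.x i) := by
  rw [x, xg_of_valid (by omega) (by omega)]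
  rfl

theorem sigma_of_not_valid {k : ℕ} (h : ¬(1 ≤ k ∧ k < n)) : sigma n k = 1 := by
  ext
  rw [val_sigma, sg, dif_neg (by omega), map_one, Units.val_one]

theorem x_of_not_valid {k : ℕ} (h : ¬(1 ≤ k ∧ k < n)) : x n k = 1 := by
  rw [x, xg, dif_neg (by omega), map_one]

theorem commute_sigma_sigma {i j : ℕ} (h : i + 1 < j ∨ j + 1 < i) :
    Commute (sigma n i : SingBraidMonoid n) (sigma n j) := by
  rw [Commute, SemiconjBy, val_sigma, val_sigma, ← map_mul, ← map_mul, sg, sg]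
  split_ifs
  · exact mk_eq_mk_of_rel (.comm_ss _ _ (by simp only; omega))
  all_goals simp only [one_mul, mul_one]

theorem commute_x_x {i j : ℕ} (h : i + 1 < j ∨ j + 1 < i) : Commute (x n i) (x n j) := by
  rw [Commute, SemiconjBy, x, x, ← map_mul, ← map_mul, xg, xg]
  split_ifs
  · exact mk_eq_mk_of_rel (.comm_xx _ _ (by simp only; omega))
  all_goals simp only [one_mul, mul_one]

theorem commute_x_sigma {i j : ℕ} (h₁ : i + 1 ≠ j) (h₂ : j + 1 ≠ i) :
    Commute (x n i) (sigma n j) := by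
  rw [Commute, SemiconjBy, x, val_sigma, ← map_mul, ← map_mul, xg, sg]
  split_ifs
  · exact mk_eq_mk_of_rel (.comm_xs _ _ (by simp only; omega))
  all_goals simp only [one_mul, mul_one]

theorem isCompatible_sigma :
    BKL.IsCompatible n (sigma n) (fun i => (sigma n i : SingBraidMonoid n)) where
  commute i j h₁ h₂ := by
    rcases lt_trichotomy i j with h | rfl | h
    · exact commute_sigma_sigma (by omega)
    · exact Commute.refl _
    · exact commute_sigma_sigma (by omega)
  semiconjBy_succ i h₁ h₂ := by
    rw [SemiconjBy, val_sigma, val_sigma, ← map_mul, ← map_mul, ← map_mul, sg_of_valid h₁ (by omega),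
      sg_of_valid (k := i + 1) (by omega) h₂, ← mul_assoc]
    exact mk_eq_mk_of_rel (.braid _ _ (by simp only; omega))
  semiconjBy_pred i h₁ h₂ := by
    rw [SemiconjBy, val_sigma, val_sigma, ← map_mul, ← map_mul, ← map_mul, sg_of_valid h₁ (by omega),
      sg_of_valid (k := i + 1) (by omega) h₂, ← mul_assoc]
    exact (mk_eq_mk_of_rel (.braid _ _ (by simp only; omega))).symm

theorem isCompatible_x : BKL.IsCompatible n (sigma n) (x n) where
  commute _ _ := commute_x_sigma
  semiconjBy_succ i h₁ h₂ := by
    rw [SemiconjBy, x, x, val_sigma, val_sigma, ← map_mul, ← map_mul, ← map_mul,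
      sg_of_valid h₁ (by omega), sg_of_valid (k := i + 1) (by omega) h₂, xg_of_valid h₁ (by omega),
      xg_of_valid (k := i + 1) (by omega) h₂, ← mul_assoc]
    exact mk_eq_mk_of_rel (.braid_x₁ _ _ (by simp only; omega))
  semiconjBy_pred i h₁ h₂ := by
    rw [SemiconjBy, x, x, val_sigma, val_sigma, ← map_mul, ← map_mul, ← map_mul,
      sg_of_valid h₁ (by omega), sg_of_valid (k := i + 1) (by omega) h₂, xg_of_valid h₁ (by omega),
      xg_of_valid (k := i + 1) (by omega) h₂, ← mul_assoc]
    exact mk_eq_mk_of_rel (.braid_x₂ _ _ (by simp only; omega))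

theorem farCommute_x_x : BKL.FarCommute (x n) (x n) := fun _ _ => commute_x_x

theorem mk_bklWord (t s : ℕ) (g : FreeMonoid (SBGen n)) :
    mk n (bklWord n t s g) =
      BKL.conjugator (sigma n) t s * mk n g * ↑(BKL.conjugator (sigma n) t s)⁻¹ := by
  have hrev : ((List.range (t - 1 - s)).map fun j => sigma n (t - 1 - j)).reverse =
      (List.range (t - 1 - s)).map fun j => sigma n (s + 1 + j) := by
    rw [← List.map_reverse, List.range_eq_range', List.reverse_range', List.map_map,
      ← List.range_eq_range']
    refine List.map_congr_left fun j hj => ?_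
    rw [List.mem_range] at hj
    simp only [Function.comp_apply]
    congr 1
    omega
  rw [BKL.conjugator, List.prod_inv_reverse, ← List.map_reverse, hrev, bklWord, map_mul, map_mul]
  simp only [map_list_prod, List.map_map, Function.comp_def, ← Units.coeHom_apply]
  rfl

theorem val_bandUnit_eq_mk_bklWord (t s : ℕ) :
    (BKL.bandUnit (sigma n) t s : SingBraidMonoid n) = mk n (bklWord n t s (sg n s)) := by
  simp [mk_bklWord, BKL.bandUnit, val_sigma]

theorem val_inv_bandUnit_eq_mk_bklWord (t s : ℕ) :
    (↑(BKL.bandUnit (sigma n) t s)⁻¹ : SingBraidMonoid n) = mk n (bklWord n t s (sgi n s)) := by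
  simp [mk_bklWord, BKL.bandUnit, val_inv_sigma, mul_assoc]

theorem band_eq_mk_bklWord (t s : ℕ) :
    BKL.band (sigma n) (x n) t s = mk n (bklWord n t s (xg n s)) := by
  rw [mk_bklWord]
  rfl

section Lift

variable {M : Type*} [Monoid M] (σ : ℕ → Mˣ) (y : ℕ → M)

def liftGen : SBGen n → M
  | .sig i => σ (i + 1)
  | .sinv i => ↑(σ (i + 1))⁻¹
  | .x i => y (i + 1)

def lift (hσ : BKL.IsCompatible n σ (fun i => (σ i : M))) (hy : BKL.IsCompatible n σ y)
    (hyy : BKL.FarCommute y y) : SingBraidMonoid n →* M :=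
  PresentedMonoid.lift (liftGen σ y) fun u v h => by
    cases h with
    | comm_ss i j h => simpa [liftGen] using (hσ.commute (i + 1) (j + 1) (by omega) (by omega)).eq
    | comm_xx i j h => simpa [liftGen] using (hyy (i + 1) (j + 1) (by omega)).eq
    | comm_xs i j h => simpa [liftGen] using (hy.commute (i + 1) (j + 1) (by omega) (by omega)).eq
    | braid i j h =>
      simpa [liftGen, h, mul_assoc] using (hσ.semiconjBy_succ (i + 1) (by omega) (by omega)).eq
    | braid_x₁ i j h =>
      simpa [liftGen, h, mul_assoc] using (hy.semiconjBy_succ (i + 1) (by omega) (by omega)).eq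
    | braid_x₂ i j h =>
      simpa [liftGen, h, mul_assoc] using (hy.semiconjBy_pred (i + 1) (by omega) (by omega)).eq
    | inv_right i => simp [liftGen]
    | inv_left i => simp [liftGen]

variable {σ y} {hσ : BKL.IsCompatible n σ (fun i => (σ i : M))} {hy : BKL.IsCompatible n σ y}
  {hyy : BKL.FarCommute y y}

theorem lift_mk_of (g : SBGen n) : lift σ y hσ hy hyy (mk n (FreeMonoid.of g)) = liftGen σ y g :=
  PresentedMonoid.lift_of _ _

theorem lift_sigma {k : ℕ} (h₁ : 1 ≤ k) (h₂ : k < n) :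
    Units.map (lift σ y hσ hy hyy) (sigma n k) = σ k := by
  ext
  rw [Units.coe_map, val_sigma, sg_of_valid h₁ h₂, lift_mk_of]
  simp only [liftGen, show k - 1 + 1 = k by omega]

theorem lift_x {k : ℕ} (h₁ : 1 ≤ k) (h₂ : k < n) : lift σ y hσ hy hyy (x n k) = y k := by
  rw [x, xg_of_valid h₁ h₂, lift_mk_of]
  simp only [liftGen, show k - 1 + 1 = k by omega]

end Lift

end SingBraidMonoid

namespace SingBKLMonoid

open BKL

variable {n : ℕ}

def mk (n : ℕ) : FreeMonoid (BKLGen n) →* SingBKLMonoid n := PresentedMonoid.mk (bklRel n)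

theorem mk_eq_mk_of_rel {u v : FreeMonoid (BKLGen n)} (h : bklRel n u v) : mk n u = mk n v :=
  PresentedMonoid.mk_eq_mk_of_rel h

theorem mk_mul_mk_eq_of_rel {u v u' v' : FreeMonoid (BKLGen n)} (h : bklRel n (u * v) (u' * v')) :
    mk n u * mk n v = mk n u' * mk n v' := by
  simpa only [map_mul] using mk_eq_mk_of_rel h

def a (n t s : ℕ) : (SingBKLMonoid n)ˣ where
  val := mk n (ag n t s)
  inv := mk n (agi n t s)
  val_inv := by
    by_cases h : 1 ≤ s ∧ s < t ∧ t ≤ n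
    · rw [← map_mul, ← map_one (mk n)]
      exact mk_eq_mk_of_rel (.inv_right t s h)
    · simp [ag, agi, h]
  inv_val := by
    by_cases h : 1 ≤ s ∧ s < t ∧ t ≤ n
    · rw [← map_mul, ← map_one (mk n)]
      exact mk_eq_mk_of_rel (.inv_left t s h)
    · simp [ag, agi, h]

def b (n t s : ℕ) : SingBKLMonoid n := mk n (bg n t s)

theorem val_a (t s : ℕ) : (a n t s : SingBKLMonoid n) = mk n (ag n t s) := rfl

theorem val_inv_a (t s : ℕ) : (↑(a n t s)⁻¹ : SingBKLMonoid n) = mk n (agi n t s) := rfl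

theorem a_of_not_valid {t s : ℕ} (h : ¬(1 ≤ s ∧ s < t ∧ t ≤ n)) : a n t s = 1 := by
  ext
  simp [val_a, ag, h]

theorem b_of_not_valid {t s : ℕ} (h : ¬(1 ≤ s ∧ s < t ∧ t ≤ n)) : b n t s = 1 := by
  simp [b, bg, h]

section Relations

variable {t s r q : ℕ}

theorem comm_aa (h : 0 < ((t : ℤ) - r) * ((t : ℤ) - q) * ((s : ℤ) - r) * ((s : ℤ) - q)) :
    Commute (a n t s : SingBKLMonoid n) (a n r q) := by
  by_cases h₁ : 1 ≤ s ∧ s < t ∧ t ≤ n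
  · by_cases h₂ : 1 ≤ q ∧ q < r ∧ r ≤ n
    · exact mk_mul_mk_eq_of_rel (.comm_aa t s r q h₁ h₂ h)
    · simp [a_of_not_valid h₂]
  · simp [a_of_not_valid h₁]

theorem comm_ab (h : 0 < ((t : ℤ) - r) * ((t : ℤ) - q) * ((s : ℤ) - r) * ((s : ℤ) - q)) :
    Commute (a n t s : SingBKLMonoid n) (b n r q) := by
  by_cases h₁ : 1 ≤ s ∧ s < t ∧ t ≤ n
  · by_cases h₂ : 1 ≤ q ∧ q < r ∧ r ≤ n
    · exact mk_mul_mk_eq_of_rel (.comm_ab t s r q h₁ h₂ h)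
    · simp [b_of_not_valid h₂]
  · simp [a_of_not_valid h₁]

theorem comm_ab' : Commute (a n t s : SingBKLMonoid n) (b n t s) := by
  by_cases h : 1 ≤ s ∧ s < t ∧ t ≤ n
  · exact mk_mul_mk_eq_of_rel (.comm_ab' t s h)
  · simp [a_of_not_valid h]

theorem comm_bb (h : 0 < ((t : ℤ) - r) * ((t : ℤ) - q) * ((s : ℤ) - r) * ((s : ℤ) - q)) :
    Commute (b n t s) (b n r q) := by
  by_cases h₁ : 1 ≤ s ∧ s < t ∧ t ≤ n
  · by_cases h₂ : 1 ≤ q ∧ q < r ∧ r ≤ n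
    · exact mk_mul_mk_eq_of_rel (.comm_bb t s r q h₁ h₂ h)
    · simp [b_of_not_valid h₂]
  · simp [b_of_not_valid h₁]

theorem band₁ (h₁ : 1 ≤ r) (h₂ : r < s) (h₃ : s < t) (h₄ : t ≤ n) :
    SemiconjBy (a n t s : SingBKLMonoid n) (a n s r) (a n t r) :=
  mk_mul_mk_eq_of_rel (.band₁ t s r h₁ h₂ h₃ h₄)

theorem band₂ (h₁ : 1 ≤ r) (h₂ : r < s) (h₃ : s < t) (h₄ : t ≤ n) :
    SemiconjBy (a n t r : SingBKLMonoid n) (a n t s) (a n s r) :=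
  mk_mul_mk_eq_of_rel (.band₂ t s r h₁ h₂ h₃ h₄)

theorem mixed₁ (h₁ : 1 ≤ r) (h₂ : r < s) (h₃ : s < t) (h₄ : t ≤ n) :
    SemiconjBy (a n t s : SingBKLMonoid n) (b n s r) (b n t r) :=
  mk_mul_mk_eq_of_rel (.mixed₁ t s r h₁ h₂ h₃ h₄)

theorem mixed₂ (h₁ : 1 ≤ r) (h₂ : r < s) (h₃ : s < t) (h₄ : t ≤ n) :
    SemiconjBy (a n s r : SingBKLMonoid n) (b n t r) (b n t s) :=
  mk_mul_mk_eq_of_rel (.mixed₂ t s r h₁ h₂ h₃ h₄)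

theorem mixed₃ (h₁ : 1 ≤ r) (h₂ : r < s) (h₃ : s < t) (h₄ : t ≤ n) :
    SemiconjBy (a n t r : SingBKLMonoid n) (b n t s) (b n s r) :=
  mk_mul_mk_eq_of_rel (.mixed₃ t s r h₁ h₂ h₃ h₄)

end Relations

def sigma (n k : ℕ) : (SingBKLMonoid n)ˣ := a n (k + 1) k

def x (n k : ℕ) : SingBKLMonoid n := b n (k + 1) k

theorem sigma_braid {k : ℕ} (h₁ : 1 ≤ k) (h₂ : k + 1 < n) :
    (sigma n k * sigma n (k + 1) * sigma n k : SingBKLMonoid n) =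
      sigma n (k + 1) * sigma n k * sigma n (k + 1) := by
  have e₁ := (band₁ (t := k + 1 + 1) h₁ k.lt_succ_self (k + 1).lt_succ_self h₂).eq
  have e₂ := (band₂ (t := k + 1 + 1) h₁ k.lt_succ_self (k + 1).lt_succ_self h₂).eq
  simp only [sigma]
  rw [mul_assoc, e₁, ← mul_assoc, ← e₂]

theorem isCompatible_sigma :
    BKL.IsCompatible n (sigma n) (fun i => (sigma n i : SingBKLMonoid n)) where
  commute i j h₁ h₂ := by
    rcases eq_or_ne i j with rfl | hij
    · exact Commute.refl _
    · exact comm_aa (mul_pos_of_lt_or_lt i.lt_succ_self j.lt_succ_self (by omega))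
  semiconjBy_succ i h₁ h₂ := by
    rw [SemiconjBy, sigma_braid h₁ h₂, mul_assoc]
  semiconjBy_pred i h₁ h₂ := by
    rw [SemiconjBy, ← sigma_braid h₁ h₂, mul_assoc]

theorem isCompatible_x : BKL.IsCompatible n (sigma n) (x n) where
  commute i j h₁ h₂ := by
    rcases eq_or_ne i j with rfl | hij
    · exact comm_ab'.symm
    · exact (comm_ab (mul_pos_of_lt_or_lt j.lt_succ_self i.lt_succ_self (by omega))).symm
  semiconjBy_succ i h₁ h₂ := by
    simp only [sigma, x]
    exact (mixed₂ (t := i + 1 + 1) h₁ i.lt_succ_self (i + 1).lt_succ_self h₂).mul_left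
      (mixed₁ h₁ i.lt_succ_self (i + 1).lt_succ_self h₂)
  semiconjBy_pred i h₁ h₂ := by
    simp only [sigma, x]
    rw [(band₁ (t := i + 1 + 1) h₁ i.lt_succ_self (i + 1).lt_succ_self h₂).eq]
    exact (mixed₃ h₁ i.lt_succ_self (i + 1).lt_succ_self h₂).mul_left comm_ab'

theorem farCommute_x_x : BKL.FarCommute (x n) (x n) := fun i j h =>
  comm_bb (mul_pos_of_lt_or_lt i.lt_succ_self j.lt_succ_self (by omega))

section Lift

variable {M : Type*} [Monoid M] (f : BKLGen n → M) {t s : ℕ} (h : 1 ≤ s ∧ s < t ∧ t ≤ n)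

theorem lift_ag : FreeMonoid.lift f (ag n t s) = f (.a ⟨(t, s), h⟩) := by
  rw [ag, dif_pos h, FreeMonoid.lift_eval_of]

theorem lift_agi : FreeMonoid.lift f (agi n t s) = f (.ainv ⟨(t, s), h⟩) := by
  rw [agi, dif_pos h, FreeMonoid.lift_eval_of]

theorem lift_bg : FreeMonoid.lift f (bg n t s) = f (.b ⟨(t, s), h⟩) := by
  rw [bg, dif_pos h, FreeMonoid.lift_eval_of]

end Lift

theorem valid_pairs_of_lt {t s r : ℕ} (h₁ : 1 ≤ r) (h₂ : r < s) (h₃ : s < t) (h₄ : t ≤ n) :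
    (1 ≤ s ∧ s < t ∧ t ≤ n) ∧ (1 ≤ r ∧ r < s ∧ s ≤ n) ∧ (1 ≤ r ∧ r < t ∧ t ≤ n) := by
  omega

def toSingBraidGen : BKLGen n → SingBraidMonoid n
  | .a p => bandUnit (SingBraidMonoid.sigma n) p.1.1 p.1.2
  | .ainv p => ↑(bandUnit (SingBraidMonoid.sigma n) p.1.1 p.1.2)⁻¹
  | .b p => band (SingBraidMonoid.sigma n) (SingBraidMonoid.x n) p.1.1 p.1.2

def toSingBraid (n : ℕ) : SingBKLMonoid n →* SingBraidMonoid n :=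
  PresentedMonoid.lift toSingBraidGen fun u v h => by
    have hσ := SingBraidMonoid.isCompatible_sigma (n := n)
    have hx := SingBraidMonoid.isCompatible_x (n := n)
    cases h with
    | comm_aa t s r q h₁ h₂ h =>
      simp only [map_mul, lift_ag _ h₁, lift_ag _ h₂, toSingBraidGen, val_bandUnit]
      exact (commute_band_band hσ hσ hσ hσ.farCommute_sigma_left hσ.farCommute_sigma_left
        h₁.2.1 h₂.2.1 h₁.2.2 h₂.2.2 h).eq
    | band₁ t s r h₁ h₂ h₃ h₄ =>
      obtain ⟨hts, hsr, htr⟩ := valid_pairs_of_lt h₁ h₂ h₃ h₄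
      simp only [map_mul, lift_ag _ hts, lift_ag _ hsr, lift_ag _ htr, toSingBraidGen, val_bandUnit]
      exact (semiconjBy_bandUnit_band₁ hσ hσ h₂ h₃ h₄).eq
    | band₂ t s r h₁ h₂ h₃ h₄ =>
      obtain ⟨hts, hsr, htr⟩ := valid_pairs_of_lt h₁ h₂ h₃ h₄
      simp only [map_mul, lift_ag _ hts, lift_ag _ hsr, lift_ag _ htr, toSingBraidGen, val_bandUnit]
      exact (semiconjBy_bandUnit_band₃ hσ hσ h₁ h₂ h₃ h₄).eq
    | inv_right t s h =>
      simp only [map_mul, map_one, lift_ag _ h, lift_agi _ h, toSingBraidGen, Units.mul_inv]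
    | inv_left t s h =>
      simp only [map_mul, map_one, lift_ag _ h, lift_agi _ h, toSingBraidGen, Units.inv_mul]
    | comm_ab t s r q h₁ h₂ h =>
      simp only [map_mul, lift_ag _ h₁, lift_bg _ h₂, toSingBraidGen, val_bandUnit]
      exact (commute_band_band hσ hσ hx hx.farCommute_sigma_left hx.farCommute_sigma_right
        h₁.2.1 h₂.2.1 h₁.2.2 h₂.2.2 h).eq
    | comm_ab' t s h =>
      simp only [map_mul, lift_ag _ h, lift_bg _ h, toSingBraidGen]
      exact (commute_bandUnit_band hx t s).eq
    | mixed₁ t s r h₁ h₂ h₃ h₄ =>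
      obtain ⟨hts, hsr, htr⟩ := valid_pairs_of_lt h₁ h₂ h₃ h₄
      simp only [map_mul, lift_ag _ hts, lift_bg _ hsr, lift_bg _ htr, toSingBraidGen]
      exact (semiconjBy_bandUnit_band₁ hσ hx h₂ h₃ h₄).eq
    | mixed₂ t s r h₁ h₂ h₃ h₄ =>
      obtain ⟨hts, hsr, htr⟩ := valid_pairs_of_lt h₁ h₂ h₃ h₄
      simp only [map_mul, lift_ag _ hsr, lift_bg _ htr, lift_bg _ hts, toSingBraidGen]
      exact (semiconjBy_bandUnit_band₂ hσ hx h₁ h₂ h₃ h₄).eq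
    | mixed₃ t s r h₁ h₂ h₃ h₄ =>
      obtain ⟨hts, hsr, htr⟩ := valid_pairs_of_lt h₁ h₂ h₃ h₄
      simp only [map_mul, lift_ag _ htr, lift_bg _ hts, lift_bg _ hsr, toSingBraidGen]
      exact (semiconjBy_bandUnit_band₃ hσ hx h₁ h₂ h₃ h₄).eq
    | comm_bb t s r q h₁ h₂ h =>
      simp only [map_mul, lift_bg _ h₁, lift_bg _ h₂, toSingBraidGen]
      have hxx := SingBraidMonoid.farCommute_x_x (n := n)
      exact (commute_band_band hσ hx hx hxx hxx h₁.2.1 h₂.2.1 h₁.2.2 h₂.2.2 h).eq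

theorem val_a_of_valid {t s : ℕ} (h : 1 ≤ s ∧ s < t ∧ t ≤ n) :
    (a n t s : SingBKLMonoid n) = PresentedMonoid.of (bklRel n) (.a ⟨(t, s), h⟩) := by
  rw [val_a, ag, dif_pos h]
  rfl

theorem val_inv_a_of_valid {t s : ℕ} (h : 1 ≤ s ∧ s < t ∧ t ≤ n) :
    (↑(a n t s)⁻¹ : SingBKLMonoid n) = PresentedMonoid.of (bklRel n) (.ainv ⟨(t, s), h⟩) := by
  rw [val_inv_a, agi, dif_pos h]
  rfl

theorem b_of_valid {t s : ℕ} (h : 1 ≤ s ∧ s < t ∧ t ≤ n) :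
    b n t s = PresentedMonoid.of (bklRel n) (.b ⟨(t, s), h⟩) := by
  rw [b, bg, dif_pos h]
  rfl

theorem toSingBraid_a {t s : ℕ} (h : 1 ≤ s ∧ s < t ∧ t ≤ n) :
    toSingBraid n (a n t s) = bandUnit (SingBraidMonoid.sigma n) t s := by
  rw [val_a_of_valid h]
  rfl

theorem toSingBraid_inv_a {t s : ℕ} (h : 1 ≤ s ∧ s < t ∧ t ≤ n) :
    toSingBraid n ↑(a n t s)⁻¹ = ↑(bandUnit (SingBraidMonoid.sigma n) t s)⁻¹ := by
  rw [val_inv_a_of_valid h]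
  rfl

theorem toSingBraid_b {t s : ℕ} (h : 1 ≤ s ∧ s < t ∧ t ≤ n) :
    toSingBraid n (b n t s) = band (SingBraidMonoid.sigma n) (SingBraidMonoid.x n) t s := by
  rw [b_of_valid h]
  rfl

def ofSingBraid (n : ℕ) : SingBraidMonoid n →* SingBKLMonoid n :=
  SingBraidMonoid.lift (sigma n) (x n) isCompatible_sigma isCompatible_x farCommute_x_x

theorem ofSingBraid_sigma (k : ℕ) :
    Units.map (ofSingBraid n) (SingBraidMonoid.sigma n k) = sigma n k := by
  by_cases h : 1 ≤ k ∧ k < n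
  · exact SingBraidMonoid.lift_sigma h.1 h.2
  · rw [SingBraidMonoid.sigma_of_not_valid h, map_one, sigma, a_of_not_valid (by omega)]

theorem ofSingBraid_x (k : ℕ) : ofSingBraid n (SingBraidMonoid.x n k) = x n k := by
  by_cases h : 1 ≤ k ∧ k < n
  · exact SingBraidMonoid.lift_x h.1 h.2
  · rw [SingBraidMonoid.x_of_not_valid h, map_one, x, b_of_not_valid (by omega)]

theorem ofSingBraid_bandUnit {t s : ℕ} (h : 1 ≤ s ∧ s < t ∧ t ≤ n) :
    Units.map (ofSingBraid n) (bandUnit (SingBraidMonoid.sigma n) t s) = a n t s := by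
  ext
  simp only [map_bandUnit, ofSingBraid_sigma, val_bandUnit]
  exact band_eq_of_semiconjBy _ _ rfl
    (fun r hsr hrn => band₁ (t := r + 1) h.1 hsr r.lt_succ_self hrn) h.2.1 h.2.2

theorem ofSingBraid_band {t s : ℕ} (h : 1 ≤ s ∧ s < t ∧ t ≤ n) :
    ofSingBraid n (band (SingBraidMonoid.sigma n) (SingBraidMonoid.x n) t s) = b n t s := by
  simp only [map_band, ofSingBraid_sigma, ofSingBraid_x]
  exact band_eq_of_semiconjBy _ _ rfl
    (fun r hsr hrn => mixed₁ (t := r + 1) h.1 hsr r.lt_succ_self hrn) h.2.1 h.2.2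

theorem ofSingBraid_comp_toSingBraid :
    (ofSingBraid n).comp (toSingBraid n) = MonoidHom.id (SingBKLMonoid n) := by
  refine PresentedMonoid.ext _ fun g => ?_
  show ofSingBraid n (toSingBraid n (.of _ g)) = .of _ g
  rcases g with ⟨⟨t, s⟩, h⟩ | ⟨⟨t, s⟩, h⟩ | ⟨⟨t, s⟩, h⟩
  · rw [← val_a_of_valid h, toSingBraid_a h, ← Units.coe_map, ofSingBraid_bandUnit h]
  · rw [← val_inv_a_of_valid h, toSingBraid_inv_a h, ← Units.coe_map_inv, ofSingBraid_bandUnit h]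
  · rw [← b_of_valid h, toSingBraid_b h, ofSingBraid_band h]

theorem toSingBraid_comp_ofSingBraid :
    (toSingBraid n).comp (ofSingBraid n) = MonoidHom.id (SingBraidMonoid n) := by
  refine PresentedMonoid.ext _ fun g => ?_
  show toSingBraid n (ofSingBraid n (.of _ g)) = .of _ g
  have hv : ∀ i : Fin (n - 1), 1 ≤ (i : ℕ) + 1 ∧ (i : ℕ) + 1 < i + 1 + 1 ∧ (i : ℕ) + 1 + 1 ≤ n :=
    fun i => by omega
  rcases g with i | i | i
  · rw [← SingBraidMonoid.val_sigma_succ, ← Units.coe_map, ofSingBraid_sigma, sigma,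
      toSingBraid_a (hv i), bandUnit_self_succ]
  · rw [← SingBraidMonoid.val_inv_sigma_succ, ← Units.coe_map_inv, ofSingBraid_sigma, sigma,
      toSingBraid_inv_a (hv i), bandUnit_self_succ]
  · rw [← SingBraidMonoid.x_succ, ofSingBraid_x, x, toSingBraid_b (hv i), band_self_succ]

def equivSingBraid (n : ℕ) : SingBKLMonoid n ≃* SingBraidMonoid n :=
  (toSingBraid n).toMulEquiv (ofSingBraid n) ofSingBraid_comp_toSingBraid
    toSingBraid_comp_ofSingBraid

end SingBKLMonoid

theorem singular_braid_BKL_presentation_general (n : ℕ) :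
    ∃ e : SingBKLMonoid n ≃* SingBraidMonoid n,
      ∀ (t s : ℕ) (h : 1 ≤ s ∧ s < t ∧ t ≤ n),
        e (PresentedMonoid.mk (bklRel n) (ag n t s)) =
          PresentedMonoid.mk (sbRel n) (bklWord n t s (sg n s)) ∧
        e (PresentedMonoid.mk (bklRel n) (agi n t s)) =
          PresentedMonoid.mk (sbRel n) (bklWord n t s (sgi n s)) ∧
        e (PresentedMonoid.mk (bklRel n) (bg n t s)) =
          PresentedMonoid.mk (sbRel n) (bklWord n t s (xg n s)) := by
  refine ⟨SingBKLMonoid.equivSingBraid n, fun t s h => ⟨?_, ?_, ?_⟩⟩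
  · exact (SingBKLMonoid.toSingBraid_a h).trans (SingBraidMonoid.val_bandUnit_eq_mk_bklWord t s)
  · exact (SingBKLMonoid.toSingBraid_inv_a h).trans
      (SingBraidMonoid.val_inv_bandUnit_eq_mk_bklWord t s)
  · exact (SingBKLMonoid.toSingBraid_b h).trans (SingBraidMonoid.band_eq_mk_bklWord t s)

theorem singular_braid_BKL_presentation (n : ℕ) (hn : 2 ≤ n) :
    ∃ e : SingBKLMonoid n ≃* SingBraidMonoid n,
      ∀ (t s : ℕ) (h : 1 ≤ s ∧ s < t ∧ t ≤ n),
        e (PresentedMonoid.mk (bklRel n) (ag n t s)) =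
          PresentedMonoid.mk (sbRel n) (bklWord n t s (sg n s)) ∧
        e (PresentedMonoid.mk (bklRel n) (agi n t s)) =
          PresentedMonoid.mk (sbRel n) (bklWord n t s (sgi n s)) ∧
        e (PresentedMonoid.mk (bklRel n) (bg n t s)) =
          PresentedMonoid.mk (sbRel n) (bklWord n t s (xg n s)) :=
  singular_braid_BKL_presentation_general n
end

section
/- For every n ≥ 1, the inverse braid monoid IBₙ (presented with a single idempotent generator ε) is isomorphic to the monoid defined by the presentation with generators σᵢ, σᵢ⁻¹ (i = 1, …, n−1) and ε₁, …, εₙ, with the braid relations on the σᵢ together with: σᵢσᵢ⁻¹ = σᵢ⁻¹σᵢ = 1; εⱼσᵢ = σᵢεⱼ for j ≠ i, i+1; εᵢσᵢ = σᵢεᵢ₊₁; εᵢ₊₁σᵢ = σᵢεᵢ; εᵢ = εᵢ²; εᵢ₊₁σᵢ² = σᵢ²εᵢ₊₁ = εᵢ₊₁; and εᵢεᵢ₊₁σᵢ = σᵢεᵢεᵢ₊₁ = εᵢεᵢ₊₁; an isomorphism is given by σᵢ ↦ σᵢ and ε ↦ ε₁. -/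
/-!
STATEMENT 16: For every n ≥ 1, the inverse braid monoid IBₙ (Easdown–Lavers
presentation with a single idempotent generator ε) is isomorphic to the
monoid presented with generators σᵢ, σᵢ⁻¹ (i = 1, …, n−1), ε₁, …, εₙ and the
relations listed below, via σᵢ ↦ σᵢ and ε ↦ ε₁.
-/

open FreeMonoid

/-- Generators of the Easdown–Lavers presentation of `IBₙ`: `σᵢ`, `σᵢ⁻¹`
(index `i : Fin (n-1)` stands for subscript `i+1`) and a single `ε`. -/
inductive IB1Gen (n : ℕ) : Type
  | sig (i : Fin (n - 1)) : IB1Gen n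
  | sinv (i : Fin (n - 1)) : IB1Gen n
  | eps : IB1Gen n

open IB1Gen in
/-- The Easdown–Lavers relations of the inverse braid monoid `IBₙ`. -/
inductive ib1Rel (n : ℕ) : FreeMonoid (IB1Gen n) → FreeMonoid (IB1Gen n) → Prop
  | braid_comm (i j : Fin (n - 1)) (h : i.val + 1 < j.val ∨ j.val + 1 < i.val) :
      ib1Rel n (of (sig i) * of (sig j)) (of (sig j) * of (sig i))
  | braid (i j : Fin (n - 1)) (h : j.val = i.val + 1) :
      ib1Rel n (of (sig i) * of (sig j) * of (sig i))
               (of (sig j) * of (sig i) * of (sig j))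
  | inv_right (i : Fin (n - 1)) : ib1Rel n (of (sig i) * of (sinv i)) 1
  | inv_left (i : Fin (n - 1)) : ib1Rel n (of (sinv i) * of (sig i)) 1
  | eps_comm (i : Fin (n - 1)) (h : 1 ≤ i.val) :
      ib1Rel n (of eps * of (sig i)) (of (sig i) * of eps)
  | eps_sig₁ (h : 0 < n - 1) :
      ib1Rel n (of eps * of (sig ⟨0, h⟩) * of eps)
               (of (sig ⟨0, h⟩) * of eps * of (sig ⟨0, h⟩) * of eps)
  | eps_sig₂ (h : 0 < n - 1) :
      ib1Rel n (of eps * of (sig ⟨0, h⟩) * of eps)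
               (of eps * of (sig ⟨0, h⟩) * of eps * of (sig ⟨0, h⟩))
  | idem : ib1Rel n (of eps) (of eps * of eps)
  | eps_sq₁ (h : 0 < n - 1) :
      ib1Rel n (of eps) (of eps * of (sig ⟨0, h⟩) * of (sig ⟨0, h⟩))
  | eps_sq₂ (h : 0 < n - 1) :
      ib1Rel n (of eps) (of (sig ⟨0, h⟩) * of (sig ⟨0, h⟩) * of eps)

/-- The inverse braid monoid `IBₙ` (Easdown–Lavers presentation). -/
def InvBraidMonoid₁ (n : ℕ) : Type := PresentedMonoid (ib1Rel n)

instance (n : ℕ) : Monoid (InvBraidMonoid₁ n) :=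
  inferInstanceAs (Monoid (PresentedMonoid (ib1Rel n)))

/-- Generators of the second presentation of `IBₙ`: `σᵢ`, `σᵢ⁻¹`
(`i : Fin (n-1)`) and `ε₁, …, εₙ` (as `eps j`, `j : Fin n`). -/
inductive IB2Gen (n : ℕ) : Type
  | sig (i : Fin (n - 1)) : IB2Gen n
  | sinv (i : Fin (n - 1)) : IB2Gen n
  | eps (j : Fin n) : IB2Gen n

open IB2Gen in
/-- The relations of the presentation of `IBₙ` with generators `εᵢ`. -/
inductive ib2Rel (n : ℕ) : FreeMonoid (IB2Gen n) → FreeMonoid (IB2Gen n) → Prop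
  | braid_comm (i j : Fin (n - 1)) (h : i.val + 1 < j.val ∨ j.val + 1 < i.val) :
      ib2Rel n (of (sig i) * of (sig j)) (of (sig j) * of (sig i))
  | braid (i j : Fin (n - 1)) (h : j.val = i.val + 1) :
      ib2Rel n (of (sig i) * of (sig j) * of (sig i))
               (of (sig j) * of (sig i) * of (sig j))
  | inv_right (i : Fin (n - 1)) : ib2Rel n (of (sig i) * of (sinv i)) 1
  | inv_left (i : Fin (n - 1)) : ib2Rel n (of (sinv i) * of (sig i)) 1
  | eps_comm (j : Fin n) (i : Fin (n - 1))
      (h : j.val ≠ i.val ∧ j.val ≠ i.val + 1) :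
      ib2Rel n (of (eps j) * of (sig i)) (of (sig i) * of (eps j))
  | eps_shift₁ (i : Fin (n - 1)) :
      ib2Rel n (of (eps ⟨i.val, by have := i.isLt; omega⟩) * of (sig i))
               (of (sig i) * of (eps ⟨i.val + 1, by have := i.isLt; omega⟩))
  | eps_shift₂ (i : Fin (n - 1)) :
      ib2Rel n (of (eps ⟨i.val + 1, by have := i.isLt; omega⟩) * of (sig i))
               (of (sig i) * of (eps ⟨i.val, by have := i.isLt; omega⟩))
  | idem (j : Fin n) : ib2Rel n (of (eps j)) (of (eps j) * of (eps j))
  | eps_sq₁ (i : Fin (n - 1)) :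
      ib2Rel n (of (eps ⟨i.val + 1, by have := i.isLt; omega⟩) * of (sig i) * of (sig i))
               (of (eps ⟨i.val + 1, by have := i.isLt; omega⟩))
  | eps_sq₂ (i : Fin (n - 1)) :
      ib2Rel n (of (sig i) * of (sig i) * of (eps ⟨i.val + 1, by have := i.isLt; omega⟩))
               (of (eps ⟨i.val + 1, by have := i.isLt; omega⟩))
  | eps_pair₁ (i : Fin (n - 1)) :
      ib2Rel n (of (eps ⟨i.val, by have := i.isLt; omega⟩) *
                of (eps ⟨i.val + 1, by have := i.isLt; omega⟩) * of (sig i))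
               (of (sig i) * of (eps ⟨i.val, by have := i.isLt; omega⟩) *
                of (eps ⟨i.val + 1, by have := i.isLt; omega⟩))
  | eps_pair₂ (i : Fin (n - 1)) :
      ib2Rel n (of (eps ⟨i.val, by have := i.isLt; omega⟩) *
                of (eps ⟨i.val + 1, by have := i.isLt; omega⟩) * of (sig i))
               (of (eps ⟨i.val, by have := i.isLt; omega⟩) *
                of (eps ⟨i.val + 1, by have := i.isLt; omega⟩))

/-- The inverse braid monoid `IBₙ` (presentation with the generators `εᵢ`). -/
def InvBraidMonoid₂ (n : ℕ) : Type := PresentedMonoid (ib2Rel n)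

instance (n : ℕ) : Monoid (InvBraidMonoid₂ n) :=
  inferInstanceAs (Monoid (PresentedMonoid (ib2Rel n)))


/-!
The maps are `σᵢ ↦ σᵢ, ε ↦ ε₁` and `σᵢ ↦ σᵢ, εⱼ ↦ σⱼ₋₁ ⋯ σ₁ ε σ₁⁻¹ ⋯ σⱼ₋₁⁻¹`; they are inverse
to each other on generators because `εⱼ₊₁ = σⱼ εⱼ σⱼ⁻¹` in the second presentation.
The Easdown–Lavers relations follow from the relations of the second presentation at index 1
alone. Conversely, by the braid relation conjugation by `σⱼσⱼ₊₁` sends `εⱼ, εⱼ₊₁, σⱼ` to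
`εⱼ₊₁, εⱼ₊₂, σⱼ₊₁`, so each relation of the second presentation is a conjugate of one at
index 1, and there it follows from the Easdown–Lavers relations.
-/

open ConjAct

section UnitsConj

variable {M : Type*} [Monoid M]

theorem toConjAct_smul_eq_self_of_commute {u : Mˣ} {m : M} (h : Commute m u) :
    toConjAct u • m = m := by
  rw [units_smul_def, ofConjAct_toConjAct, ← h.eq, Units.mul_inv_cancel_right]

theorem toConjAct_smul_self (u : Mˣ) : toConjAct u • (u : M) = u :=
  toConjAct_smul_eq_self_of_commute (Commute.refl _)

theorem Commute.conjAct_smul (g : ConjAct Mˣ) {a b : M} (h : Commute a b) :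
    Commute (g • a) (g • b) := by
  simp only [Commute, SemiconjBy, ← smul_mul', h.eq]

theorem IsIdempotentElem.conjAct_smul (g : ConjAct Mˣ) {e : M} (h : IsIdempotentElem e) :
    IsIdempotentElem (g • e) := by
  rw [IsIdempotentElem, ← smul_mul', h.eq]

theorem mul_inv_eq_mul_of_mul_mul_eq {u : Mˣ} {m : M} (h : m * u * u = m) :
    m * ↑u⁻¹ = m * u := by
  conv_lhs => rw [← h]
  exact Units.mul_inv_cancel_right _ _

end UnitsConj

theorem MonoidHom.map_toConjAct_smul {M N : Type*} [Monoid M] [Monoid N] (f : M →* N) (u : Mˣ)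
    (m : M) : f (toConjAct u • m) = toConjAct (Units.map f u) • f m := by
  simp only [units_smul_def, ofConjAct_toConjAct, map_mul, Units.coe_map, Units.coe_map_inv]

theorem mul_mul_inv_eq_of_braid {G : Type*} [Group G] {x y : G} (h : x * y * x = y * x * y) :
    x * y * x * (x * y)⁻¹ = y := by
  rw [h]; group

theorem toConjAct_mul_smul_of_braid {M : Type*} [Monoid M] {x y : Mˣ}
    (h : x * y * x = y * x * y) : toConjAct (x * y) • (x : M) = y :=
  congrArg Units.val (mul_mul_inv_eq_of_braid h)

section ShiftRelations

variable {M : Type*} [Monoid M] {s : Mˣ} {a b : M}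

theorem eq_mul_mul_of_shift (h₁ : a * s = s * b) (hb : b * s * s = b) : a = s * b * s := by
  calc a = s * b * ↑s⁻¹ := (Units.eq_mul_inv_iff_mul_eq s).mpr h₁
    _ = s * b * s := by rw [mul_assoc, mul_inv_eq_mul_of_mul_mul_eq hb, ← mul_assoc]

theorem mul_mul_eq_self_of_shift (h₁ : a * s = s * b) (hb : b * s * s = b) : a * s * s = a := by
  conv_rhs => rw [eq_mul_mul_of_shift h₁ hb]
  rw [h₁]

theorem units_mul_mul_eq_self_of_shift (h₁ : a * s = s * b) (h₂ : b * s = s * a)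
    (hb : b * s * s = b) : s * s * a = a := by
  conv_rhs => rw [eq_mul_mul_of_shift h₁ hb]
  rw [mul_assoc, ← h₂, ← mul_assoc]

theorem mul_comm_of_shift (h₁ : a * s = s * b) (h₂ : b * s = s * a) (hb : b * s * s = b)
    (hp₁ : a * b * s = s * a * b) (hp₂ : a * b * s = a * b) : b * a = a * b :=
  calc b * a = b * s * b * s := by
        rw [eq_mul_mul_of_shift h₁ hb]; simp only [mul_assoc]
    _ = a * b * s * s := by rw [h₂, hp₁]
    _ = a * b := by rw [hp₂, hp₂]

theorem mul_units_mul_eq_mul_of_shift (h₁ : a * s = s * b) (h₂ : b * s = s * a)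
    (hb : b * s * s = b) (hp₁ : a * b * s = s * a * b) (hp₂ : a * b * s = a * b) :
    a * s * a = a * b :=
  calc a * s * a = s * (b * a) := by rw [h₁, mul_assoc]
    _ = a * b := by rw [mul_comm_of_shift h₁ h₂ hb hp₁ hp₂, ← mul_assoc, ← hp₁, hp₂]

theorem units_mul_mul_units_mul_eq_of_shift (h₁ : a * s = s * b) (h₂ : b * s = s * a)
    (hb : b * s * s = b) (hp₁ : a * b * s = s * a * b) (hp₂ : a * b * s = a * b) :
    s * a * s * a = a * s * a := by
  rw [show s * a * s * a = s * (a * s * a) by simp only [mul_assoc],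
    mul_units_mul_eq_mul_of_shift h₁ h₂ hb hp₁ hp₂, ← mul_assoc, ← hp₁, hp₂]

theorem mul_units_mul_mul_units_eq_of_shift (h₁ : a * s = s * b) (h₂ : b * s = s * a)
    (hb : b * s * s = b) (hp₁ : a * b * s = s * a * b) (hp₂ : a * b * s = a * b) :
    a * s * a * s = a * s * a := by
  rw [mul_units_mul_eq_mul_of_shift h₁ h₂ hb hp₁ hp₂, hp₂]

end ShiftRelations

namespace InvBraidMonoid₁

variable {n i j : ℕ}

/-- `σᵢ₊₁`, extended by `1` for `i ≥ n - 1` so that only the braid relation needs a range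
hypothesis. -/
def sigma (n i : ℕ) : (InvBraidMonoid₁ n)ˣ :=
  if h : i < n - 1 then
    { val := PresentedMonoid.of _ (IB1Gen.sig ⟨i, h⟩)
      inv := PresentedMonoid.of _ (IB1Gen.sinv ⟨i, h⟩)
      val_inv := PresentedMonoid.mk_eq_mk_of_rel (ib1Rel.inv_right _)
      inv_val := PresentedMonoid.mk_eq_mk_of_rel (ib1Rel.inv_left _) }
  else 1

theorem coe_sigma (h : i < n - 1) :
    (sigma n i : InvBraidMonoid₁ n) = PresentedMonoid.of _ (IB1Gen.sig ⟨i, h⟩) := by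
  rw [sigma, dif_pos h]

theorem coe_sigma_inv (h : i < n - 1) :
    (↑(sigma n i)⁻¹ : InvBraidMonoid₁ n) =
      PresentedMonoid.of _ (IB1Gen.sinv ⟨i, h⟩) := by
  rw [sigma, dif_pos h]; rfl

theorem sigma_of_le (h : n - 1 ≤ i) : sigma n i = 1 := dif_neg (by omega)

theorem commute_sigma_sigma (h : i + 2 ≤ j) : Commute (sigma n i) (sigma n j) := by
  by_cases hj : j < n - 1
  · refine Units.ext ?_
    rw [Units.val_mul, Units.val_mul, coe_sigma hj, coe_sigma (by omega)]
    exact PresentedMonoid.mk_eq_mk_of_rel (ib1Rel.braid_comm _ _ (.inl (show i + 1 < j by omega)))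
  · simp [sigma_of_le (n := n) (i := j) (by omega)]

theorem sigma_braid (h : i + 1 < n - 1) :
    sigma n i * sigma n (i + 1) * sigma n i = sigma n (i + 1) * sigma n i * sigma n (i + 1) := by
  refine Units.ext ?_
  simp only [Units.val_mul, coe_sigma h, coe_sigma (show i < n - 1 by omega)]
  exact PresentedMonoid.mk_eq_mk_of_rel (ib1Rel.braid _ _ rfl)

/-- `εⱼ₊₁ = σⱼ ⋯ σ₁ ε σ₁⁻¹ ⋯ σⱼ⁻¹`. -/
def epsilon (n : ℕ) : ℕ → InvBraidMonoid₁ n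
  | 0 => PresentedMonoid.of _ IB1Gen.eps
  | j + 1 => toConjAct (sigma n j) • epsilon n j

theorem epsilon_succ : epsilon n (j + 1) = toConjAct (sigma n j) • epsilon n j := rfl

theorem commute_epsilon_zero_sigma (h : 1 ≤ i) : Commute (epsilon n 0) (sigma n i) := by
  by_cases hi : i < n - 1
  · rw [coe_sigma hi]
    exact PresentedMonoid.mk_eq_mk_of_rel (ib1Rel.eps_comm _ h)
  · simp [sigma_of_le (n := n) (i := i) (by omega)]

theorem isIdempotentElem_epsilon_zero : IsIdempotentElem (epsilon n 0) :=
  (PresentedMonoid.mk_eq_mk_of_rel (ib1Rel.idem (n := n))).symm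

theorem epsilon_zero_mul_sigma_mul_sigma :
    epsilon n 0 * sigma n 0 * sigma n 0 = epsilon n 0 := by
  by_cases h : 0 < n - 1
  · rw [coe_sigma h]
    exact (PresentedMonoid.mk_eq_mk_of_rel (ib1Rel.eps_sq₁ h)).symm
  · simp [sigma_of_le (n := n) (i := 0) (by omega)]

theorem sigma_mul_sigma_mul_epsilon_zero :
    sigma n 0 * sigma n 0 * epsilon n 0 = epsilon n 0 := by
  by_cases h : 0 < n - 1
  · rw [coe_sigma h]
    exact (PresentedMonoid.mk_eq_mk_of_rel (ib1Rel.eps_sq₂ h)).symm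
  · simp [sigma_of_le (n := n) (i := 0) (by omega)]

theorem sigma_mul_epsilon_zero_mul_sigma_mul_epsilon_zero :
    sigma n 0 * epsilon n 0 * sigma n 0 * epsilon n 0 = epsilon n 0 * sigma n 0 * epsilon n 0 := by
  by_cases h : 0 < n - 1
  · rw [coe_sigma h]
    exact (PresentedMonoid.mk_eq_mk_of_rel (ib1Rel.eps_sig₁ h)).symm
  · simp [sigma_of_le (n := n) (i := 0) (by omega)]

theorem epsilon_zero_mul_sigma_mul_epsilon_zero_mul_sigma :
    epsilon n 0 * sigma n 0 * epsilon n 0 * sigma n 0 = epsilon n 0 * sigma n 0 * epsilon n 0 := by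
  by_cases h : 0 < n - 1
  · rw [coe_sigma h]
    exact (PresentedMonoid.mk_eq_mk_of_rel (ib1Rel.eps_sig₂ h)).symm
  · simp [sigma_of_le (n := n) (i := 0) (by omega)]

theorem epsilon_succ_succ :
    epsilon n (j + 2) = toConjAct (sigma n (j + 1) * sigma n j) • epsilon n j := by
  rw [toConjAct_mul, mul_smul]; rfl

theorem commute_epsilon_sigma_of_lt (h : j < i) : Commute (epsilon n j) (sigma n i) := by
  induction j with
  | zero => exact commute_epsilon_zero_sigma h
  | succ j ih =>
    have hσ := toConjAct_smul_eq_self_of_commute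
      (commute_sigma_sigma (n := n) (show j + 2 ≤ i by omega)).units_val.symm
    rw [epsilon_succ, ← hσ]
    exact (ih (by omega)).conjAct_smul _

def shiftConj (n j : ℕ) : ConjAct (InvBraidMonoid₁ n)ˣ :=
  toConjAct (sigma n j * sigma n (j + 1))

theorem shiftConj_smul_epsilon : shiftConj n j • epsilon n j = epsilon n (j + 1) := by
  rw [shiftConj, toConjAct_mul, mul_smul,
    toConjAct_smul_eq_self_of_commute (commute_epsilon_sigma_of_lt (Nat.lt_succ_self j))]
  rfl

theorem shiftConj_smul_epsilon_succ (h : j + 1 < n - 1) :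
    shiftConj n j • epsilon n (j + 1) = epsilon n (j + 2) :=
  calc shiftConj n j • epsilon n (j + 1)
      = toConjAct (sigma n j * sigma n (j + 1) * sigma n j) • epsilon n j := by
        rw [toConjAct_mul _ (sigma n j), mul_smul]; rfl
    _ = toConjAct (sigma n (j + 1) * sigma n j) • epsilon n j := by
        rw [sigma_braid h, toConjAct_mul _ (sigma n (j + 1)), mul_smul,
          toConjAct_smul_eq_self_of_commute (commute_epsilon_sigma_of_lt (Nat.lt_succ_self j))]
    _ = epsilon n (j + 2) := epsilon_succ_succ.symm

theorem shiftConj_smul_sigma (h : j + 1 < n - 1) :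
    shiftConj n j • (sigma n j : InvBraidMonoid₁ n) = sigma n (j + 1) :=
  toConjAct_mul_smul_of_braid (sigma_braid h)

theorem epsilon_mul_sigma_mul_sigma : epsilon n j * sigma n j * sigma n j = epsilon n j := by
  induction j with
  | zero => exact epsilon_zero_mul_sigma_mul_sigma
  | succ j ih =>
    by_cases h : j + 1 < n - 1
    · rw [← shiftConj_smul_sigma h, ← shiftConj_smul_epsilon, ← smul_mul', ← smul_mul', ih]
    · simp [sigma_of_le (n := n) (i := j + 1) (by omega)]

theorem sigma_mul_sigma_mul_epsilon : sigma n j * sigma n j * epsilon n j = epsilon n j := by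
  induction j with
  | zero => exact sigma_mul_sigma_mul_epsilon_zero
  | succ j ih =>
    by_cases h : j + 1 < n - 1
    · rw [← shiftConj_smul_sigma h, ← shiftConj_smul_epsilon, ← smul_mul', ← smul_mul', ih]
    · simp [sigma_of_le (n := n) (i := j + 1) (by omega)]

theorem isIdempotentElem_epsilon : IsIdempotentElem (epsilon n j) := by
  induction j with
  | zero => exact isIdempotentElem_epsilon_zero
  | succ j ih => exact ih.conjAct_smul _

theorem commute_epsilon_sigma_of_add_two_le (hj : j < n) (h : i + 2 ≤ j) :
    Commute (epsilon n j) (sigma n i) := by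
  induction j with
  | zero => omega
  | succ j ih =>
    rcases (show i + 2 ≤ j ∨ j = i + 1 by omega) with hij | rfl
    · have hσ := toConjAct_smul_eq_self_of_commute
        (commute_sigma_sigma (n := n) hij).units_val
      rw [epsilon_succ, ← hσ]
      exact (ih (by omega) hij).conjAct_smul _
    · rw [epsilon_succ_succ, ← toConjAct_mul_smul_of_braid (sigma_braid (by omega)).symm]
      exact (commute_epsilon_sigma_of_lt (Nat.lt_succ_self i)).conjAct_smul _

theorem epsilon_zero_mul_epsilon_one :
    epsilon n 0 * epsilon n 1 = epsilon n 0 * sigma n 0 * epsilon n 0 :=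
  calc epsilon n 0 * epsilon n 1 = epsilon n 0 * sigma n 0 * epsilon n 0 * ↑(sigma n 0)⁻¹ := by
        rw [epsilon_succ, units_smul_def, ofConjAct_toConjAct]; simp only [mul_assoc]
    _ = epsilon n 0 * sigma n 0 * epsilon n 0 := by
        conv_lhs => rw [← epsilon_zero_mul_sigma_mul_epsilon_zero_mul_sigma]
        exact Units.mul_inv_cancel_right _ _

theorem epsilon_mul_epsilon_succ_mul_sigma :
    epsilon n j * epsilon n (j + 1) * sigma n j = epsilon n j * epsilon n (j + 1) := by
  induction j with
  | zero =>
    rw [epsilon_zero_mul_epsilon_one]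
    exact epsilon_zero_mul_sigma_mul_epsilon_zero_mul_sigma
  | succ j ih =>
    by_cases h : j + 1 < n - 1
    · rw [← shiftConj_smul_epsilon, ← shiftConj_smul_epsilon_succ h,
        ← shiftConj_smul_sigma h, ← smul_mul', ← smul_mul', ih]
    · simp [sigma_of_le (n := n) (i := j + 1) (by omega)]

theorem sigma_mul_epsilon_mul_epsilon_succ :
    sigma n j * epsilon n j * epsilon n (j + 1) = epsilon n j * epsilon n (j + 1) := by
  induction j with
  | zero =>
    rw [mul_assoc, epsilon_zero_mul_epsilon_one]
    simp only [← mul_assoc]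
    exact sigma_mul_epsilon_zero_mul_sigma_mul_epsilon_zero
  | succ j ih =>
    by_cases h : j + 1 < n - 1
    · rw [← shiftConj_smul_epsilon, ← shiftConj_smul_epsilon_succ h,
        ← shiftConj_smul_sigma h, ← smul_mul', ← smul_mul', ih, smul_mul']
    · simp [sigma_of_le (n := n) (i := j + 1) (by omega)]

theorem epsilon_succ_mul_sigma : epsilon n (j + 1) * sigma n j = sigma n j * epsilon n j := by
  rw [epsilon_succ, units_smul_def, ofConjAct_toConjAct, Units.inv_mul_cancel_right]

theorem epsilon_mul_sigma : epsilon n j * sigma n j = sigma n j * epsilon n (j + 1) := by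
  rw [epsilon_succ, units_smul_def, ofConjAct_toConjAct, ← mul_assoc, ← mul_assoc,
    sigma_mul_sigma_mul_epsilon, mul_inv_eq_mul_of_mul_mul_eq epsilon_mul_sigma_mul_sigma]

theorem epsilon_succ_mul_sigma_mul_sigma :
    epsilon n (j + 1) * sigma n j * sigma n j = epsilon n (j + 1) := by
  rw [epsilon_succ, ← toConjAct_smul_self, ← smul_mul', ← smul_mul',
    epsilon_mul_sigma_mul_sigma]

theorem sigma_mul_sigma_mul_epsilon_succ :
    sigma n j * sigma n j * epsilon n (j + 1) = epsilon n (j + 1) := by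
  rw [epsilon_succ, ← toConjAct_smul_self, ← smul_mul', ← smul_mul',
    sigma_mul_sigma_mul_epsilon]

end InvBraidMonoid₁

namespace IB2Gen

variable {n : ℕ}

def toInvBraidMonoid₁ : IB2Gen n → InvBraidMonoid₁ n
  | sig i => InvBraidMonoid₁.sigma n i
  | sinv i => ↑(InvBraidMonoid₁.sigma n i)⁻¹
  | eps j => InvBraidMonoid₁.epsilon n j

open InvBraidMonoid₁ in
theorem lift_toInvBraidMonoid₁_eq_of_ib2Rel {a b : FreeMonoid (IB2Gen n)} (h : ib2Rel n a b) :
    FreeMonoid.lift toInvBraidMonoid₁ a = FreeMonoid.lift toInvBraidMonoid₁ b := by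
  cases h with
  | braid_comm i j h =>
    rcases h with h | h
    · exact (commute_sigma_sigma (by omega)).units_val.eq
    · exact (commute_sigma_sigma (by omega)).units_val.eq.symm
  | braid i j h =>
    obtain ⟨j, hj⟩ := j
    subst h
    exact congrArg Units.val (sigma_braid hj)
  | inv_right i => exact Units.mul_inv _
  | inv_left i => exact Units.inv_mul _
  | eps_comm j i h =>
    rcases Nat.lt_or_ge j.val i.val with hlt | hge
    · exact (commute_epsilon_sigma_of_lt hlt).eq
    · exact (commute_epsilon_sigma_of_add_two_le j.isLt (by omega)).eq
  | eps_shift₁ i => exact epsilon_mul_sigma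
  | eps_shift₂ i => exact epsilon_succ_mul_sigma
  | idem j => exact isIdempotentElem_epsilon.eq.symm
  | eps_sq₁ i => exact epsilon_succ_mul_sigma_mul_sigma
  | eps_sq₂ i => exact sigma_mul_sigma_mul_epsilon_succ
  | eps_pair₁ i =>
    exact epsilon_mul_epsilon_succ_mul_sigma.trans sigma_mul_epsilon_mul_epsilon_succ.symm
  | eps_pair₂ i => exact epsilon_mul_epsilon_succ_mul_sigma

end IB2Gen

def InvBraidMonoid₂.toInvBraidMonoid₁ (n : ℕ) :
    InvBraidMonoid₂ n →* InvBraidMonoid₁ n :=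
  PresentedMonoid.lift IB2Gen.toInvBraidMonoid₁ fun _ _ ↦
    IB2Gen.lift_toInvBraidMonoid₁_eq_of_ib2Rel

namespace InvBraidMonoid₂

variable {n : ℕ}

def sigma (i : Fin (n - 1)) : (InvBraidMonoid₂ n)ˣ where
  val := PresentedMonoid.of _ (IB2Gen.sig i)
  inv := PresentedMonoid.of _ (IB2Gen.sinv i)
  val_inv := PresentedMonoid.mk_eq_mk_of_rel (ib2Rel.inv_right i)
  inv_val := PresentedMonoid.mk_eq_mk_of_rel (ib2Rel.inv_left i)

def epsilon (n : ℕ) (j : Fin n) : InvBraidMonoid₂ n := PresentedMonoid.of _ (IB2Gen.eps j)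

variable (i : Fin (n - 1))

theorem epsilon_mul_sigma :
    epsilon n ⟨i, by omega⟩ * sigma i = sigma i * epsilon n ⟨i + 1, by omega⟩ :=
  PresentedMonoid.mk_eq_mk_of_rel (ib2Rel.eps_shift₁ i)

theorem epsilon_succ_mul_sigma :
    epsilon n ⟨i + 1, by omega⟩ * sigma i = sigma i * epsilon n ⟨i, by omega⟩ :=
  PresentedMonoid.mk_eq_mk_of_rel (ib2Rel.eps_shift₂ i)

theorem epsilon_succ_mul_sigma_mul_sigma :
    epsilon n ⟨i + 1, by omega⟩ * sigma i * sigma i =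
      epsilon n ⟨i + 1, by omega⟩ :=
  PresentedMonoid.mk_eq_mk_of_rel (ib2Rel.eps_sq₁ i)

theorem epsilon_mul_epsilon_succ_mul_sigma_comm :
    epsilon n ⟨i, by omega⟩ * epsilon n ⟨i + 1, by omega⟩ * sigma i =
      sigma i * epsilon n ⟨i, by omega⟩ * epsilon n ⟨i + 1, by omega⟩ :=
  PresentedMonoid.mk_eq_mk_of_rel (ib2Rel.eps_pair₁ i)

theorem epsilon_mul_epsilon_succ_mul_sigma :
    epsilon n ⟨i, by omega⟩ * epsilon n ⟨i + 1, by omega⟩ * sigma i =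
      epsilon n ⟨i, by omega⟩ * epsilon n ⟨i + 1, by omega⟩ :=
  PresentedMonoid.mk_eq_mk_of_rel (ib2Rel.eps_pair₂ i)

theorem epsilon_mul_sigma_mul_sigma :
    epsilon n ⟨i, by omega⟩ * sigma i * sigma i = epsilon n ⟨i, by omega⟩ :=
  mul_mul_eq_self_of_shift (epsilon_mul_sigma i) (epsilon_succ_mul_sigma_mul_sigma i)

theorem sigma_mul_sigma_mul_epsilon :
    sigma i * sigma i * epsilon n ⟨i, by omega⟩ = epsilon n ⟨i, by omega⟩ :=
  units_mul_mul_eq_self_of_shift (epsilon_mul_sigma i) (epsilon_succ_mul_sigma i)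
    (epsilon_succ_mul_sigma_mul_sigma i)

theorem sigma_mul_epsilon_mul_sigma_mul_epsilon :
    sigma i * epsilon n ⟨i, by omega⟩ * sigma i * epsilon n ⟨i, by omega⟩ =
      epsilon n ⟨i, by omega⟩ * sigma i * epsilon n ⟨i, by omega⟩ :=
  units_mul_mul_units_mul_eq_of_shift (epsilon_mul_sigma i) (epsilon_succ_mul_sigma i)
    (epsilon_succ_mul_sigma_mul_sigma i) (epsilon_mul_epsilon_succ_mul_sigma_comm i)
    (epsilon_mul_epsilon_succ_mul_sigma i)

theorem epsilon_mul_sigma_mul_epsilon_mul_sigma :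
    epsilon n ⟨i, by omega⟩ * sigma i * epsilon n ⟨i, by omega⟩ * sigma i =
      epsilon n ⟨i, by omega⟩ * sigma i * epsilon n ⟨i, by omega⟩ :=
  mul_units_mul_mul_units_eq_of_shift (epsilon_mul_sigma i) (epsilon_succ_mul_sigma i)
    (epsilon_succ_mul_sigma_mul_sigma i) (epsilon_mul_epsilon_succ_mul_sigma_comm i)
    (epsilon_mul_epsilon_succ_mul_sigma i)

end InvBraidMonoid₂

namespace IB1Gen

variable {n : ℕ}

def toInvBraidMonoid₂ (hn : 0 < n) : IB1Gen n → InvBraidMonoid₂ n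
  | sig i => InvBraidMonoid₂.sigma i
  | sinv i => ↑(InvBraidMonoid₂.sigma i)⁻¹
  | eps => InvBraidMonoid₂.epsilon n ⟨0, hn⟩

open InvBraidMonoid₂ in
theorem lift_toInvBraidMonoid₂_eq_of_ib1Rel (hn : 0 < n) {a b : FreeMonoid (IB1Gen n)}
    (h : ib1Rel n a b) :
    FreeMonoid.lift (toInvBraidMonoid₂ hn) a = FreeMonoid.lift (toInvBraidMonoid₂ hn) b := by
  cases h with
  | braid_comm i j h => exact PresentedMonoid.mk_eq_mk_of_rel (ib2Rel.braid_comm i j h)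
  | braid i j h => exact PresentedMonoid.mk_eq_mk_of_rel (ib2Rel.braid i j h)
  | inv_right i => exact Units.mul_inv _
  | inv_left i => exact Units.inv_mul _
  | eps_comm i h =>
    exact PresentedMonoid.mk_eq_mk_of_rel
      (ib2Rel.eps_comm ⟨0, hn⟩ i ⟨show 0 ≠ i.val by omega, show 0 ≠ i.val + 1 by omega⟩)
  | idem => exact PresentedMonoid.mk_eq_mk_of_rel (ib2Rel.idem _)
  | eps_sig₁ h => exact (sigma_mul_epsilon_mul_sigma_mul_epsilon ⟨0, h⟩).symm
  | eps_sig₂ h => exact (epsilon_mul_sigma_mul_epsilon_mul_sigma ⟨0, h⟩).symm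
  | eps_sq₁ h => exact (epsilon_mul_sigma_mul_sigma ⟨0, h⟩).symm
  | eps_sq₂ h => exact (sigma_mul_sigma_mul_epsilon ⟨0, h⟩).symm

end IB1Gen

def InvBraidMonoid₁.toInvBraidMonoid₂ {n : ℕ} (hn : 0 < n) :
    InvBraidMonoid₁ n →* InvBraidMonoid₂ n :=
  PresentedMonoid.lift (IB1Gen.toInvBraidMonoid₂ hn) fun _ _ ↦
    IB1Gen.lift_toInvBraidMonoid₂_eq_of_ib1Rel hn

namespace InvBraidMonoid₁

variable {n : ℕ}

theorem map_toInvBraidMonoid₂_sigma (hn : 0 < n) {i : ℕ} (h : i < n - 1) :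
    Units.map (toInvBraidMonoid₂ hn) (sigma n i) = InvBraidMonoid₂.sigma ⟨i, h⟩ :=
  Units.ext (by rw [Units.coe_map, coe_sigma h]; rfl)

theorem toInvBraidMonoid₂_epsilon (hn : 0 < n) {j : ℕ} (hj : j < n) :
    toInvBraidMonoid₂ hn (epsilon n j) = InvBraidMonoid₂.epsilon n ⟨j, hj⟩ := by
  induction j with
  | zero => rfl
  | succ j ih =>
    rw [epsilon_succ, MonoidHom.map_toConjAct_smul, map_toInvBraidMonoid₂_sigma hn (by omega),
      ih (by omega), units_smul_def,
      ofConjAct_toConjAct, ← InvBraidMonoid₂.epsilon_succ_mul_sigma, Units.mul_inv_cancel_right]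

theorem toInvBraidMonoid₁_comp_toInvBraidMonoid₂ (hn : 0 < n) :
    (InvBraidMonoid₂.toInvBraidMonoid₁ n).comp (toInvBraidMonoid₂ hn) = MonoidHom.id _ :=
  PresentedMonoid.ext _ fun
    | .sig i => coe_sigma i.isLt
    | .sinv i => coe_sigma_inv i.isLt
    | .eps => rfl

theorem toInvBraidMonoid₂_comp_toInvBraidMonoid₁ (hn : 0 < n) :
    (toInvBraidMonoid₂ hn).comp (InvBraidMonoid₂.toInvBraidMonoid₁ n) = MonoidHom.id _ :=
  PresentedMonoid.ext _ fun
    | .sig i => congrArg Units.val (map_toInvBraidMonoid₂_sigma hn i.isLt)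
    | .sinv i => congrArg (fun u ↦ Units.val u⁻¹) (map_toInvBraidMonoid₂_sigma hn i.isLt)
    | .eps j => toInvBraidMonoid₂_epsilon hn j.isLt

end InvBraidMonoid₁

theorem inverse_braid_monoid_presentations (n : ℕ) (hn : 1 ≤ n) :
    ∃ e : InvBraidMonoid₁ n ≃* InvBraidMonoid₂ n,
      e (PresentedMonoid.of (ib1Rel n) IB1Gen.eps) =
        PresentedMonoid.of (ib2Rel n) (IB2Gen.eps ⟨0, by omega⟩) ∧
      ∀ i : Fin (n - 1),
        e (PresentedMonoid.of (ib1Rel n) (IB1Gen.sig i)) =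
          PresentedMonoid.of (ib2Rel n) (IB2Gen.sig i) :=
  ⟨(InvBraidMonoid₁.toInvBraidMonoid₂ hn).toMulEquiv (InvBraidMonoid₂.toInvBraidMonoid₁ n)
    (InvBraidMonoid₁.toInvBraidMonoid₁_comp_toInvBraidMonoid₂ hn)
    (InvBraidMonoid₁.toInvBraidMonoid₂_comp_toInvBraidMonoid₁ hn), rfl, fun _ ↦ rfl⟩
end
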